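/- arXiv:2007.11979 — 7 statements merged into one kernel-verified Lean document; each statement's English description precedes it below -/
import Mathlib

section
/- (Selberg-Jack integral in the Schur case, $\theta = 1$) For a partition $\kappa$ with at most $n$ parts and reals $a, b > 0$, $\frac{1}{S_n(a,b,1)}\int_{[0,1]^n} \prod_{j=1}^n u_j^a(1-u_j)^b\, s_\kappa(u_1,\ldots,u_n) \prod_{1\le j<k\le n}(u_j - u_k)^2 \, du = s_\kappa(1^n) \prod_{j=1}^n \frac{\Gamma(a + n - j + 1 + \kappa_j)}{\Gamma(a + b + 2n - j + 1 + \kappa_j)} \cdot \frac{\Gamma(a + b + 2n - j + 1)}{\Gamma(a + n - j + 1)}$, where $S_n(a,b,1)$ is the Selberg integral with $\theta = 1$. -/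
open MeasureTheory

/-- Complete homogeneous symmetric polynomial `h_k` in `n` variables. -/
noncomputable def hcomplete (n k : ℕ) (x : Fin n → ℝ) : ℝ :=
  ∑ m ∈ (Finset.univ : Finset (Fin n)).sym k, ((m : Sym (Fin n) k).1.map x).prod

/-- Schur polynomial in `n` variables via the Jacobi–Trudi determinant. -/
noncomputable def schur (n : ℕ) (κ : Fin n → ℕ) (x : Fin n → ℝ) : ℝ :=
  Matrix.det (Matrix.of fun i j : Fin n =>
    if (i : ℕ) ≤ κ i + (j : ℕ) then hcomplete n (κ i + (j : ℕ) - (i : ℕ)) x else 0)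

/-!
By the bialternant formula `s_κ · a_δ = a_{κ+δ}` (a consequence of the Jacobi–Trudi
determinant and of `E(-t) H(t) = 1`), both integrands are the weight times a product of two
alternants, `a_{κ+δ} a_δ` and `a_δ a_δ`. Andréief's identity turns each integral into `n!` times
the determinant of the beta integrals `B(xᵢ + δⱼ, b + 1)` with `xᵢ = a + 1 + eᵢ`. Such an entry
is `Γ(b+1) Γ(xᵢ) / Γ(xᵢ+b+n)` times `Pⱼ(xᵢ)` for a polynomial `Pⱼ` of degree `n - 1` that does
not depend on `e`, so the determinant is a product of gamma ratios, the Vandermonde `Δ(e)` and a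
constant `det C`. In the quotient only the gamma ratios and `Δ(κ+δ) / Δ(δ) = s_κ(1ⁿ)` survive;
`det C ≠ 0` because the Selberg integral is positive.
-/

open Finset
open scoped Nat

section GeneratingSeries

open PowerSeries

variable {ι R : Type*} [DecidableEq ι] [CommRing R]

noncomputable def hcompleteOn (T : Finset ι) (r : ℕ) (x : ι → R) : R :=
  ∑ m ∈ T.sym r, ((m : Sym ι r).1.map x).prod

theorem hcomplete_eq_hcompleteOn (n k : ℕ) (x : Fin n → ℝ) :
    hcomplete n k x = hcompleteOn univ k x := rfl

theorem hcompleteOn_zero (T : Finset ι) (x : ι → R) : hcompleteOn T 0 x = 1 := by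
  rw [hcompleteOn, sym_zero, sum_singleton]
  rfl

theorem hcompleteOn_empty_succ (r : ℕ) (x : ι → R) : hcompleteOn ∅ (r + 1) x = 0 := by
  simp [hcompleteOn]

theorem hcompleteOn_succ_of_mem {T : Finset ι} {k : ι} (hk : k ∈ T) (r : ℕ) (x : ι → R) :
    hcompleteOn T (r + 1) x = hcompleteOn (T.erase k) (r + 1) x + x k * hcompleteOn T r x := by
  have hwithout : (T.sym (r + 1)).filter (k ∉ ·) = (T.erase k).sym (r + 1) := by
    ext m
    simp only [mem_filter, mem_sym_iff, mem_erase]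
    exact ⟨fun ⟨hT, hk⟩ a ha => ⟨fun hak => hk (hak ▸ ha), hT a ha⟩,
      fun h => ⟨fun a ha => (h a ha).2, fun hk' => (h k hk').1 rfl⟩⟩
  have hwith : ∑ m ∈ T.sym r, x k * ((m : Sym ι r).1.map x).prod
      = ∑ m ∈ (T.sym (r + 1)).filter (k ∈ ·), ((m : Sym ι (r + 1)).1.map x).prod := by
    refine sum_bij' (fun m _ => k ::ₛ m) (fun m hm => Sym.erase m k (mem_filter.mp hm).2)
      ?_ ?_ (fun m _ => Sym.erase_cons_head m k) (fun m _ => Sym.cons_erase _) ?_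
    · intro m hm
      refine mem_filter.mpr ⟨mem_sym_iff.mpr fun a ha => ?_, Sym.mem_cons_self k m⟩
      rcases Sym.mem_cons.mp ha with rfl | h
      · exact hk
      · exact mem_sym_iff.mp hm a h
    · intro m hm
      rw [mem_sym_iff]
      intro a ha
      rw [← Sym.mem_coe, Sym.coe_erase] at ha
      exact mem_sym_iff.mp (mem_filter.mp hm).1 a (Multiset.mem_of_mem_erase ha)
    · intro m _
      change _ = ((↑(k ::ₛ m) : Multiset ι).map x).prod
      rw [Sym.coe_cons, Multiset.map_cons, Multiset.prod_cons]
      rfl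
  rw [hcompleteOn, ← sum_filter_add_sum_filter_not _ (k ∈ ·), ← hwith, hwithout, add_comm,
    hcompleteOn, hcompleteOn, mul_sum]

noncomputable def hSeries (T : Finset ι) (x : ι → R) : R⟦X⟧ :=
  PowerSeries.mk fun r => hcompleteOn T r x

noncomputable def eSeries (T : Finset ι) (x : ι → R) : R⟦X⟧ :=
  ∏ i ∈ T, (1 - C (x i) * X)

theorem coeff_one_sub_C_mul_X_mul (c : R) (f : R⟦X⟧) (r : ℕ) :
    coeff (r + 1) ((1 - C c * X) * f) = coeff (r + 1) f - c * coeff r f := by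
  rw [sub_mul, one_mul, map_sub, mul_assoc, coeff_C_mul, coeff_succ_X_mul]

theorem one_sub_C_mul_X_mul_mk_pow (c : R) : (1 - C c * X) * PowerSeries.mk (c ^ ·) = 1 := by
  ext (_ | r)
  · simp
  · rw [coeff_one_sub_C_mul_X_mul]
    simp [pow_succ, mul_comm]

theorem one_sub_C_mul_X_mul_hSeries {T : Finset ι} {k : ι} (hk : k ∈ T) (x : ι → R) :
    (1 - C (x k) * X) * hSeries T x = hSeries (T.erase k) x := by
  ext (_ | r)
  · simp [hSeries, hcompleteOn_zero]
  · rw [coeff_one_sub_C_mul_X_mul]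
    simp only [hSeries, coeff_mk, hcompleteOn_succ_of_mem hk r x]
    ring

theorem eSeries_mul_hSeries (T : Finset ι) (x : ι → R) : eSeries T x * hSeries T x = 1 := by
  induction T using Finset.induction_on with
  | empty =>
    ext (_ | r)
    · simp [eSeries, hSeries, hcompleteOn_zero]
    · simp [eSeries, hSeries, hcompleteOn_empty_succ]
  | insert k T hkT ih =>
    rw [eSeries, prod_insert hkT, ← eSeries, mul_comm (1 - _), mul_assoc,
      one_sub_C_mul_X_mul_hSeries (mem_insert_self k T), erase_insert hkT, ih]

theorem eSeries_erase_mul_hSeries {T : Finset ι} {k : ι} (hk : k ∈ T) (x : ι → R) :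
    eSeries (T.erase k) x * hSeries T x = PowerSeries.mk (x k ^ ·) := by
  have h := eSeries_mul_hSeries T x
  rw [eSeries, ← mul_prod_erase T _ hk, ← eSeries] at h
  calc eSeries (T.erase k) x * hSeries T x
      = (PowerSeries.mk (x k ^ ·) * (1 - C (x k) * X)) * (eSeries (T.erase k) x * hSeries T x) := by
        rw [mul_comm (PowerSeries.mk _), one_sub_C_mul_X_mul_mk_pow, one_mul]
    _ = PowerSeries.mk (x k ^ ·) * ((1 - C (x k) * X) * eSeries (T.erase k) x * hSeries T x) := by
        ring
    _ = PowerSeries.mk (x k ^ ·) := by rw [h, mul_one]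

theorem coeff_eSeries_of_card_lt {T : Finset ι} (x : ι → R) {s : ℕ} (hs : #T < s) :
    coeff s (eSeries T x) = 0 := by
  induction T using Finset.induction_on generalizing s with
  | empty => rw [eSeries, prod_empty, coeff_one, if_neg (by simp at hs; omega)]
  | insert k T hkT ih =>
    rw [card_insert_of_notMem hkT] at hs
    obtain ⟨s, rfl⟩ : ∃ s', s = s' + 1 := ⟨s - 1, by omega⟩
    rw [eSeries, prod_insert hkT, ← eSeries, coeff_one_sub_C_mul_X_mul, ih (by omega),
      ih (by omega), mul_zero, sub_zero]

theorem PowerSeries.coeff_mul_eq_sum_range {f : R⟦X⟧} {N : ℕ} (hf : ∀ s, N ≤ s → coeff s f = 0)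
    (g : R⟦X⟧) (m : ℕ) :
    coeff m (f * g) = ∑ s ∈ range N, if s ≤ m then coeff s f * coeff (m - s) g else 0 := by
  rw [coeff_mul, Nat.sum_antidiagonal_eq_sum_range_succ (fun i j => coeff i f * coeff j g),
    ← sum_filter]
  refine (sum_subset (fun s hs => ?_) fun s hs hns => ?_).symm
  · simp only [mem_filter, mem_range] at hs ⊢
    omega
  · simp only [mem_filter, mem_range, not_and, not_le] at hs hns
    rw [hf s (by omega), zero_mul]

end GeneratingSeries

section Alternant

open PowerSeries

variable {n : ℕ}

def delta (n : ℕ) : Fin n → ℕ := fun i => n - 1 - i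

theorem cast_delta {R : Type*} [AddGroupWithOne R] (j : Fin n) :
    ((delta n j : ℕ) : R) = n - 1 - j := by
  have := j.isLt
  rw [delta, Nat.cast_sub (by omega), Nat.cast_sub (by omega), Nat.cast_one]

theorem sum_delta {M : Type*} [AddCommMonoid M] (F : ℕ → M) :
    ∑ j : Fin n, F (delta n j) = ∑ s ∈ range n, F s :=
  (Fin.sum_univ_eq_sum_range (fun j => F (n - 1 - j)) n).trans (sum_range_reflect F n)

def alternant {R : Type*} [CommRing R] (e : Fin n → ℕ) (u : Fin n → R) :
    Matrix (Fin n) (Fin n) R :=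
  Matrix.of fun i k => u k ^ e i

noncomputable def jacobiTrudi (n : ℕ) (κ : Fin n → ℕ) (u : Fin n → ℝ) :
    Matrix (Fin n) (Fin n) ℝ :=
  Matrix.of fun i j : Fin n =>
    if (i : ℕ) ≤ κ i + (j : ℕ) then hcomplete n (κ i + (j : ℕ) - (i : ℕ)) u else 0

theorem schur_eq_det_jacobiTrudi (κ : Fin n → ℕ) (u : Fin n → ℝ) :
    schur n κ u = (jacobiTrudi n κ u).det := rfl

/-- Entry `(j, k)` is `(-1)ᵐ e_m` of the variables other than `u k`, where `m = n - 1 - j`. -/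
noncomputable def signedElementaryMatrix (n : ℕ) (u : Fin n → ℝ) : Matrix (Fin n) (Fin n) ℝ :=
  Matrix.of fun j k => coeff (delta n j) (eSeries (univ.erase k) u)

theorem jacobiTrudi_mul_signedElementaryMatrix (κ : Fin n → ℕ) (u : Fin n → ℝ) :
    jacobiTrudi n κ u * signedElementaryMatrix n u = alternant (κ + delta n) u := by
  ext i k
  set m := (κ + delta n) i
  have hterm : ∀ j : Fin n, jacobiTrudi n κ u i j * signedElementaryMatrix n u j k =
      if delta n j ≤ m then
        coeff (delta n j) (eSeries (univ.erase k) u) * coeff (m - delta n j) (hSeries univ u)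
      else 0 := by
    intro j
    have := i.isLt
    have := j.isLt
    simp only [jacobiTrudi, signedElementaryMatrix, hSeries, Matrix.of_apply, coeff_mk, m,
      Pi.add_apply, delta, hcomplete_eq_hcompleteOn]
    by_cases hij : (i : ℕ) ≤ κ i + j
    · rw [if_pos hij, if_pos (by omega), show κ i + j - i = κ i + (n - 1 - i) - (n - 1 - j) by
        omega, mul_comm]
    · rw [if_neg hij, if_neg (by omega), zero_mul]
  have hsmall : ∀ s, n ≤ s → coeff s (eSeries (univ.erase k) u) = 0 := fun s hs =>
    coeff_eSeries_of_card_lt u (by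
      have := k.isLt
      rw [card_erase_of_mem (mem_univ k), card_fin]
      omega)
  rw [Matrix.mul_apply, sum_congr rfl fun j _ => hterm j,
    sum_delta (fun s => if s ≤ m then coeff s (eSeries (univ.erase k) u) *
      coeff (m - s) (hSeries univ u) else 0),
    ← coeff_mul_eq_sum_range hsmall, eSeries_erase_mul_hSeries (mem_univ k), coeff_mk]
  rfl

theorem schur_zero (u : Fin n → ℝ) : schur n 0 u = 1 := by
  have htri : (jacobiTrudi n 0 u).IsUpperTriangular := fun i j hij => by
    simp only [jacobiTrudi, Matrix.of_apply, Pi.zero_apply, id] at hij ⊢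
    rw [if_neg (by omega)]
  rw [schur_eq_det_jacobiTrudi, Matrix.det_of_isUpperTriangular htri]
  refine prod_eq_one fun i _ => ?_
  simp [jacobiTrudi, hcomplete_eq_hcompleteOn, hcompleteOn_zero]

theorem schur_mul_det_alternant_delta (κ : Fin n → ℕ) (u : Fin n → ℝ) :
    schur n κ u * (alternant (delta n) u).det = (alternant (κ + delta n) u).det := by
  have h0 := jacobiTrudi_mul_signedElementaryMatrix 0 u
  rw [← jacobiTrudi_mul_signedElementaryMatrix κ u, Matrix.det_mul, ← zero_add (delta n), ← h0,
    Matrix.det_mul, ← schur_eq_det_jacobiTrudi, ← schur_eq_det_jacobiTrudi, schur_zero, one_mul]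

theorem det_alternant_delta_sq {R : Type*} [CommRing R] (u : Fin n → R) :
    (alternant (delta n) u).det ^ 2 = ∏ j, ∏ k ∈ Ioi j, (u j - u k) ^ 2 := by
  have hrev :
      alternant (delta n) u = (Matrix.vandermonde u).transpose.submatrix Fin.revPerm id := by
    ext i k
    simp only [alternant, delta, Matrix.of_apply, Matrix.submatrix_apply, Matrix.transpose_apply,
      Matrix.vandermonde_apply, id_eq, Fin.revPerm_apply, Fin.val_rev]
    congr 1
    omega
  have hsign : ((Equiv.Perm.sign (Fin.revPerm : Equiv.Perm (Fin n)) : ℤ) : R) ^ 2 = 1 := by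
    rw [← Int.cast_pow, ← Units.val_pow_eq_pow_val, Int.units_sq, Units.val_one, Int.cast_one]
  rw [hrev, Matrix.det_permute, Matrix.det_transpose, Matrix.det_vandermonde, mul_pow, hsign,
    one_mul, ← prod_pow]
  exact prod_congr rfl fun j _ => by
    rw [← prod_pow]
    exact prod_congr rfl fun k _ => by rw [← neg_sub, neg_sq]

theorem det_alternant_pow {R : Type*} [CommRing R] (e : Fin n → ℕ) (t : R) :
    (alternant e fun k => t ^ (k : ℕ)).det = ∏ i, ∏ j ∈ Ioi i, (t ^ e j - t ^ e i) := by
  rw [← Matrix.det_vandermonde]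
  congr 1
  ext i k
  simp only [alternant, Matrix.of_apply, Matrix.vandermonde_apply, ← pow_mul, mul_comm]

end Alternant

section SchurAtOne

open Filter Topology

variable {n : ℕ}

theorem continuous_hcomplete (n k : ℕ) : Continuous (hcomplete n k) :=
  continuous_finsetSum _ fun _ _ => continuous_multiset_prod _ fun i _ => continuous_apply i

theorem continuous_schur (κ : Fin n → ℕ) : Continuous (schur n κ) := by
  refine Continuous.matrix_det (continuous_pi fun i => continuous_pi fun j => ?_)
  simp only [Matrix.of_apply]
  split_ifs
  exacts [continuous_hcomplete n _, continuous_const]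

theorem tendsto_pow_sub_pow_div_sub_one (p q : ℕ) :
    Tendsto (fun t : ℝ => (t ^ p - t ^ q) / (t - 1)) (𝓝[≠] 1) (𝓝 ((p : ℝ) - q)) := by
  have h := hasDerivAt_iff_tendsto_slope.mp ((hasDerivAt_pow p (1 : ℝ)).sub (hasDerivAt_pow q 1))
  simp only [one_pow, mul_one] at h
  refine h.congr fun t => ?_
  simp [slope_def_field]

/-- Principal specialization `u k = t ^ k` of the bialternant formula, in the limit `t → 1`. -/
theorem schur_one_mul_prod_delta (κ : Fin n → ℕ) :
    schur n κ (fun _ => 1) * ∏ i, ∏ j ∈ Ioi i, ((delta n j : ℝ) - delta n i) =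
      ∏ i, ∏ j ∈ Ioi i, (((κ + delta n) j : ℕ) - ((κ + delta n) i : ℕ) : ℝ) := by
  set D : (Fin n → ℕ) → ℝ → ℝ := fun e t => ∏ i, ∏ j ∈ Ioi i, (t ^ e j - t ^ e i) / (t - 1)
  have hD : ∀ e, Tendsto (D e) (𝓝[≠] 1) (𝓝 (∏ i, ∏ j ∈ Ioi i, ((e j : ℝ) - e i))) := fun e =>
    tendsto_finsetProd _ fun i _ => tendsto_finsetProd _ fun j _ =>
      tendsto_pow_sub_pow_div_sub_one _ _
  have hschur : Tendsto (fun t : ℝ => schur n κ fun k => t ^ (k : ℕ)) (𝓝[≠] 1)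
      (𝓝 (schur n κ fun _ => 1)) := by
    have := ((continuous_schur κ).comp (continuous_pi fun k => continuous_pow (k : ℕ))).tendsto 1
    simpa [Function.comp_def] using this.mono_left nhdsWithin_le_nhds
  refine tendsto_nhds_unique ((hschur.mul (hD (delta n))).congr fun t => ?_) (hD (κ + delta n))
  simp only [D, prod_div_distrib]
  rw [← det_alternant_pow, ← det_alternant_pow, ← schur_mul_det_alternant_delta, mul_div_assoc]

end SchurAtOne

section Andreief

open Equiv

variable {ι α 𝕜 : Type*} [Fintype ι] [DecidableEq ι] [MeasurableSpace α] [RCLike 𝕜]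

theorem integral_det_mul_det (μ : Measure α) [SigmaFinite μ] (f g : ι → α → 𝕜)
    (hfg : ∀ i j, Integrable (fun x => f i x * g j x) μ) :
    ∫ u, (Matrix.of fun i k => f i (u k)).det * (Matrix.of fun i k => g i (u k)).det
        ∂(Measure.pi fun _ => μ) =
      ((Fintype.card ι)! : 𝕜) * (Matrix.of fun i j => ∫ x, f i x * g j x ∂μ).det := by
  set M : Matrix ι ι 𝕜 := Matrix.of fun i j => ∫ x, f i x * g j x ∂μ
  let ε : Perm ι → 𝕜 := fun σ => ((Perm.sign σ : ℤ) : 𝕜)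
  have hexpand : ∀ u : ι → α,
      (Matrix.of fun i k => f i (u k)).det * (Matrix.of fun i k => g i (u k)).det =
        ∑ σ : Perm ι, ∑ τ : Perm ι, ε σ * (ε τ * ∏ k, f (σ k) (u k) * g (τ k) (u k)) := by
    intro u
    simp only [Matrix.det_apply', Matrix.of_apply, sum_mul_sum, prod_mul_distrib]
    exact sum_congr rfl fun σ _ => sum_congr rfl fun τ _ => by ring
  have hint : ∀ σ τ : Perm ι, Integrable (fun u : ι → α => ε σ * (ε τ *
      ∏ k, f (σ k) (u k) * g (τ k) (u k))) (Measure.pi fun _ => μ) := fun σ τ =>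
    ((Integrable.fintype_prod fun k => hfg (σ k) (τ k)).const_mul _).const_mul _
  -- the sum over `τ` is the determinant of `M` with its rows permuted by `σ`
  have hrows : ∀ σ : Perm ι, ∑ τ : Perm ι, ε τ * ∏ k, M (σ k) (τ k) = ε σ * M.det := by
    intro σ
    rw [← Matrix.det_permute, ← Matrix.det_transpose, Matrix.det_apply']
    rfl
  calc ∫ u, (Matrix.of fun i k => f i (u k)).det * (Matrix.of fun i k => g i (u k)).det
          ∂(Measure.pi fun _ => μ)
      = ∑ σ : Perm ι, ∑ τ : Perm ι, ε σ * (ε τ * ∏ k, M (σ k) (τ k)) := by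
        simp_rw [hexpand]
        rw [integral_finsetSum _ fun σ _ => integrable_finsetSum _ fun τ _ => hint σ τ]
        refine sum_congr rfl fun σ _ => ?_
        rw [integral_finsetSum _ fun τ _ => hint σ τ]
        refine sum_congr rfl fun τ _ => ?_
        rw [integral_const_mul, integral_const_mul,
          integral_fintype_prod_eq_prod (fun k x => f (σ k) x * g (τ k) x)]
        rfl
    _ = ∑ _σ : Perm ι, M.det := by
        refine sum_congr rfl fun σ _ => ?_
        rw [← mul_sum, hrows, ← mul_assoc, ← Int.cast_mul, ← Units.val_mul, Int.units_mul_self,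
          Units.val_one, Int.cast_one, one_mul]
    _ = ((Fintype.card ι)! : 𝕜) * M.det := by
        rw [sum_const, card_univ, Fintype.card_perm, nsmul_eq_mul]

end Andreief

section Beta

open Real Set

theorem integral_Icc_rpow_mul_one_sub_rpow {p q : ℝ} (hp : 0 < p) (hq : 0 < q) :
    ∫ t in Icc (0 : ℝ) 1, t ^ (p - 1) * (1 - t) ^ (q - 1) = Gamma p * Gamma q / Gamma (p + q) := by
  rw [← ProbabilityTheory.beta, ProbabilityTheory.beta_eq_betaIntegralReal p q hp hq,
    Complex.betaIntegral, intervalIntegral.integral_of_le zero_le_one,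
    integral_Icc_eq_integral_Ioc, ← RCLike.re_to_complex, ← integral_re]
  · refine setIntegral_congr_fun measurableSet_Ioc fun t ⟨ht0, ht1⟩ => ?_
    norm_cast
    rw [← Complex.ofReal_cpow ht0.le, ← Complex.ofReal_cpow (by linarith), RCLike.re_to_complex,
      ← Complex.ofReal_mul, Complex.ofReal_re]
  · exact (intervalIntegrable_iff_integrableOn_Ioc_of_le zero_le_one).mp
      (Complex.betaIntegral_convergent (by simpa) (by simpa))

theorem integral_Icc_rpow_mul_one_sub_rpow_mul_pow {a b : ℝ} (ha : -1 < a) (hb : -1 < b)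
    (c : ℕ) :
    ∫ t in Icc (0 : ℝ) 1, t ^ a * (1 - t) ^ b * t ^ c =
      Gamma (a + 1 + c) * Gamma (b + 1) / Gamma (a + 1 + c + (b + 1)) := by
  rw [← integral_Icc_rpow_mul_one_sub_rpow (by linarith [c.cast_nonneg (α := ℝ)]) (by linarith),
    integral_Icc_eq_integral_Ioc, integral_Icc_eq_integral_Ioc]
  refine setIntegral_congr_fun measurableSet_Ioc fun t ⟨ht0, _⟩ => ?_
  rw [← rpow_natCast, mul_right_comm, ← rpow_add ht0]
  ring_nf

theorem Real.Gamma_add_nat_eq_mul_eval_ascPochhammer {x : ℝ} (hx : 0 < x) (m : ℕ) :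
    Gamma (x + m) = Gamma x * (ascPochhammer ℝ m).eval x := by
  induction m with
  | zero => simp
  | succ m ih =>
    rw [Nat.cast_succ, ← add_assoc, Gamma_add_one (by positivity), ih, ascPochhammer_succ_eval]
    ring

end Beta

section BetaMatrix

open Real Polynomial

variable {n : ℕ}

theorem Matrix.of_eval_eq_vandermonde_mul {R : Type*} [CommRing R] (v : Fin n → R)
    (P : Fin n → R[X]) (hP : ∀ j, (P j).natDegree < n) :
    Matrix.of (fun i j => (P j).eval (v i)) =
      Matrix.vandermonde v * Matrix.of fun (k : Fin n) j => (P j).coeff k := by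
  ext i j
  rw [Matrix.of_apply, Matrix.mul_apply, eval_eq_sum_range' (hP j),
    ← Fin.sum_univ_eq_sum_range (fun k => (P j).coeff k * v i ^ k)]
  simp only [Matrix.vandermonde_apply, Matrix.of_apply, mul_comm]

/-- `Γ(x + b + n) / Γ(x + δ_j + b + 1)` times `Γ(x + δ_j) / Γ(x)`, as a polynomial in `x`. -/
noncomputable def betaColumnPoly (n : ℕ) (b : ℝ) (j : Fin n) : ℝ[X] :=
  ascPochhammer ℝ (delta n j) * (ascPochhammer ℝ j).comp (X + C (b + (n - j)))

noncomputable def betaCoeffMatrix (n : ℕ) (b : ℝ) : Matrix (Fin n) (Fin n) ℝ :=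
  Matrix.of fun k j => (betaColumnPoly n b j).coeff k

theorem natDegree_betaColumnPoly (b : ℝ) (j : Fin n) :
    (betaColumnPoly n b j).natDegree = n - 1 := by
  have := j.isLt
  have hcomp : ((ascPochhammer ℝ j).comp (X + C (b + (n - j)))).Monic :=
    (monic_ascPochhammer _ _).comp (monic_X_add_C _) (by rw [natDegree_X_add_C]; exact one_ne_zero)
  rw [betaColumnPoly, (monic_ascPochhammer _ _).natDegree_mul hcomp, natDegree_comp,
    ascPochhammer_natDegree, ascPochhammer_natDegree, natDegree_X_add_C, mul_one, delta]
  omega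

theorem eval_betaColumnPoly (b : ℝ) (j : Fin n) (x : ℝ) :
    (betaColumnPoly n b j).eval x =
      (ascPochhammer ℝ (delta n j)).eval x * (ascPochhammer ℝ j).eval (x + b + (n - j)) := by
  simp [betaColumnPoly, eval_comp, add_assoc]

theorem Gamma_mul_Gamma_div_Gamma_eq_mul_eval_betaColumnPoly {b x : ℝ} (hb : -1 < b)
    (hx : 0 < x) (j : Fin n) :
    Gamma (x + delta n j) * Gamma (b + 1) / Gamma (x + delta n j + (b + 1)) =
      Gamma (b + 1) * (Gamma x / Gamma (x + b + n)) * (betaColumnPoly n b j).eval x := by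
  have hy : x + delta n j + (b + 1) = x + b + (n - j) := by rw [cast_delta]; ring
  have hypos : 0 < x + b + (n - j) := by
    rw [← hy]
    linarith [(delta n j).cast_nonneg (α := ℝ)]
  have hnum := Real.Gamma_add_nat_eq_mul_eval_ascPochhammer hx (delta n j)
  have hden := Real.Gamma_add_nat_eq_mul_eval_ascPochhammer hypos j
  rw [show x + b + (n - j) + j = x + b + n by ring] at hden
  rw [eval_betaColumnPoly, hnum, hden, hy]
  have := Gamma_pos_of_pos hypos
  have := ascPochhammer_pos (j : ℕ) _ hypos
  field_simp

theorem det_of_Gamma_mul_Gamma_div_Gamma {b : ℝ} (hb : -1 < b) (x : Fin n → ℝ) (hx : ∀ i, 0 < x i) :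
    (Matrix.of fun i j =>
        Gamma (x i + delta n j) * Gamma (b + 1) / Gamma (x i + delta n j + (b + 1))).det =
      Gamma (b + 1) ^ n * (betaCoeffMatrix n b).det * (∏ i, ∏ j ∈ Finset.Ioi i, (x j - x i)) *
        ∏ i, Gamma (x i) / Gamma (x i + b + n) := by
  have hfactor : (Matrix.of fun i j =>
        Gamma (x i + delta n j) * Gamma (b + 1) / Gamma (x i + delta n j + (b + 1))) =
      Matrix.of fun i j => Gamma (b + 1) * (Gamma (x i) / Gamma (x i + b + n)) *
        (Matrix.vandermonde x * betaCoeffMatrix n b) i j := by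
    rw [betaCoeffMatrix, ← Matrix.of_eval_eq_vandermonde_mul x _ fun j => by
      rw [natDegree_betaColumnPoly]
      exact Nat.sub_lt (Fin.pos j) one_pos]
    ext i j
    exact Gamma_mul_Gamma_div_Gamma_eq_mul_eval_betaColumnPoly hb (hx i) j
  rw [hfactor, Matrix.det_mul_column, Matrix.det_mul, Matrix.det_vandermonde, prod_mul_distrib,
    Finset.prod_const, Finset.card_univ, Fintype.card_fin]
  ring

end BetaMatrix

section SelbergIntegral

open Real

theorem setIntegral_pos_of_continuous_of_mem_interior {X : Type*} [TopologicalSpace X]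
    [MeasurableSpace X] [OpensMeasurableSpace X] {μ : Measure X} [μ.IsOpenPosMeasure]
    {s : Set X} {f : X → ℝ}
    (hs : MeasurableSet s) (hf : Continuous f) (hfs : IntegrableOn f s μ)
    (hnonneg : ∀ x ∈ s, 0 ≤ f x) {x : X} (hx : x ∈ interior s) (hfx : 0 < f x) :
    0 < ∫ x in s, f x ∂μ := by
  rw [setIntegral_pos_iff_support_of_nonneg_ae (ae_restrict_of_forall_mem hs hnonneg) hfs]
  refine ((isOpen_interior.inter (hf.isOpen_preimage _ isOpen_Ioi)).measure_pos μ
    ⟨x, hx, hfx⟩).trans_le (measure_mono ?_)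
  rintro y ⟨hys, hy⟩
  exact ⟨(Set.mem_Ioi.mp hy).ne', interior_subset hys⟩

variable {n : ℕ} {a b : ℝ}

theorem continuous_rpow_mul_one_sub_rpow (ha : 0 ≤ a) (hb : 0 ≤ b) :
    Continuous fun t : ℝ => t ^ a * (1 - t) ^ b :=
  (continuous_rpow_const ha).mul
    ((continuous_rpow_const hb).comp (continuous_const.sub continuous_id))

theorem integral_mul_prod_sub_sq_pos (ha : 0 ≤ a) (hb : 0 ≤ b) :
    0 < ∫ u in Set.univ.pi (fun _ : Fin n => Set.Icc (0 : ℝ) 1),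
      (∏ j, u j ^ a * (1 - u j) ^ b) * ∏ j, ∏ k ∈ Ioi j, (u j - u k) ^ 2 := by
  have hw := continuous_rpow_mul_one_sub_rpow ha hb
  have hcont : Continuous fun u : Fin n → ℝ =>
      (∏ j, u j ^ a * (1 - u j) ^ b) * ∏ j, ∏ k ∈ Ioi j, (u j - u k) ^ 2 :=
    (continuous_finsetProd _ fun j _ => hw.comp (continuous_apply j)).mul (by fun_prop)
  set x : Fin n → ℝ := fun k => (k + 1) / (n + 1)
  have hx : ∀ k, x k ∈ Set.Ioo 0 1 := fun k => ⟨by positivity,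
    (div_lt_one (by positivity)).mpr (by have := k.isLt; norm_cast; omega)⟩
  refine setIntegral_pos_of_continuous_of_mem_interior
    (MeasurableSet.univ_pi fun _ => measurableSet_Icc) hcont
    (hcont.continuousOn.integrableOn_compact (isCompact_univ_pi fun _ => isCompact_Icc))
    (fun u hu => ?_) (x := x) ?_ ?_
  · have hu : ∀ j, u j ∈ Set.Icc 0 1 := fun j => hu j (Set.mem_univ j)
    exact mul_nonneg (prod_nonneg fun j _ => mul_nonneg (rpow_nonneg (hu j).1 a)
      (rpow_nonneg (sub_nonneg.mpr (hu j).2) b))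
      (prod_nonneg fun _ _ => prod_nonneg fun _ _ => sq_nonneg _)
  · rw [interior_pi_set Set.finite_univ]
    exact fun k _ => by simpa using hx k
  · refine mul_pos (prod_pos fun j _ => mul_pos (rpow_pos_of_pos (hx j).1 a)
      (rpow_pos_of_pos (sub_pos.mpr (hx j).2) b)) (prod_pos fun j _ => prod_pos fun k hk => ?_)
    have hjk : x j < x k := by
      have hjk : j < k := Finset.mem_Ioi.mp hk
      simp only [x]
      gcongr
      exact_mod_cast hjk
    rw [← neg_sub, neg_sq]
    exact pow_pos (sub_pos.mpr hjk) 2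

theorem integral_mul_det_alternant_mul_det_alternant_delta (ha : 0 ≤ a) (hb : 0 ≤ b)
    (e : Fin n → ℕ) :
    ∫ u in Set.univ.pi (fun _ : Fin n => Set.Icc (0 : ℝ) 1),
        (∏ j, u j ^ a * (1 - u j) ^ b) * (alternant e u).det * (alternant (delta n) u).det =
      n ! * Gamma (b + 1) ^ n * (betaCoeffMatrix n b).det *
        (∏ i, ∏ j ∈ Ioi i, ((e j : ℝ) - e i)) *
          ∏ i, Gamma (a + 1 + e i) / Gamma (a + 1 + e i + b + n) := by
  set w : ℝ → ℝ := fun t => t ^ a * (1 - t) ^ b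
  have hint : ∀ i j, Integrable (fun t => w t * t ^ e i * t ^ delta n j)
      (volume.restrict (Set.Icc 0 1)) := fun i j =>
    (((continuous_rpow_mul_one_sub_rpow ha hb).mul (continuous_pow _)).mul
      (continuous_pow _)).integrableOn_Icc
  calc _ = ∫ u, (Matrix.of fun i k => w (u k) * u k ^ e i).det *
          (Matrix.of fun i k => u k ^ delta n i).det
          ∂(Measure.pi fun _ => volume.restrict (Set.Icc (0 : ℝ) 1)) := by
        rw [← Measure.restrict_pi_pi]
        congr 1
        funext u
        rw [show (Matrix.of fun i k => w (u k) * u k ^ e i) =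
          Matrix.of fun i k => w (u k) * alternant e u i k from rfl, Matrix.det_mul_row]
        rfl
    _ = n ! * (Matrix.of fun i j =>
          ∫ t in Set.Icc (0 : ℝ) 1, w t * t ^ e i * t ^ delta n j).det := by
        rw [integral_det_mul_det _ _ _ hint, Fintype.card_fin]
    _ = n ! * (Matrix.of fun i j => Gamma (a + 1 + e i + delta n j) * Gamma (b + 1) /
          Gamma (a + 1 + e i + delta n j + (b + 1))).det := by
        congr 2
        ext i j
        simp_rw [Matrix.of_apply, w, mul_assoc, ← pow_add, ← mul_assoc]
        rw [integral_Icc_rpow_mul_one_sub_rpow_mul_pow (by linarith) (by linarith)]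
        push_cast
        ring_nf
    _ = _ := by
        rw [det_of_Gamma_mul_Gamma_div_Gamma (by linarith) _ fun i => by positivity]
        simp only [add_sub_add_left_eq_sub]
        ring

theorem integral_mul_schur_mul_prod_sub_sq (ha : 0 ≤ a) (hb : 0 ≤ b) (κ : Fin n → ℕ) :
    ∫ u in Set.univ.pi (fun _ : Fin n => Set.Icc (0 : ℝ) 1),
        (∏ j, u j ^ a * (1 - u j) ^ b) * schur n κ u * ∏ j, ∏ k ∈ Ioi j, (u j - u k) ^ 2 =
      n ! * Gamma (b + 1) ^ n * (betaCoeffMatrix n b).det *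
        (∏ i, ∏ j ∈ Ioi i, (((κ + delta n) j : ℕ) - ((κ + delta n) i : ℕ) : ℝ)) *
          ∏ i, Gamma (a + 1 + (κ + delta n) i) / Gamma (a + 1 + (κ + delta n) i + b + n) := by
  rw [← integral_mul_det_alternant_mul_det_alternant_delta ha hb]
  refine setIntegral_congr_fun (MeasurableSet.univ_pi fun _ => measurableSet_Icc) fun u _ => ?_
  rw [← det_alternant_delta_sq, ← schur_mul_det_alternant_delta]
  ring

theorem integral_mul_prod_sub_sq (ha : 0 ≤ a) (hb : 0 ≤ b) :
    ∫ u in Set.univ.pi (fun _ : Fin n => Set.Icc (0 : ℝ) 1),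
        (∏ j, u j ^ a * (1 - u j) ^ b) * ∏ j, ∏ k ∈ Ioi j, (u j - u k) ^ 2 =
      n ! * Gamma (b + 1) ^ n * (betaCoeffMatrix n b).det *
        (∏ i, ∏ j ∈ Ioi i, ((delta n j : ℝ) - delta n i)) *
          ∏ i, Gamma (a + 1 + delta n i) / Gamma (a + 1 + delta n i + b + n) := by
  simpa [schur_zero] using integral_mul_schur_mul_prod_sub_sq ha hb (0 : Fin n → ℕ)

end SelbergIntegral

theorem selberg_schur_integral_general (n : ℕ) (a b : ℝ) (ha : 0 < a) (hb : 0 < b)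
    (κ : Fin n → ℕ) :
    (∫ u in Set.univ.pi (fun _ : Fin n => Set.Icc (0 : ℝ) 1),
        (∏ j, u j ^ a * (1 - u j) ^ b) * schur n κ u *
          ∏ j, ∏ k ∈ Finset.Ioi j, (u j - u k) ^ 2) /
      (∫ u in Set.univ.pi (fun _ : Fin n => Set.Icc (0 : ℝ) 1),
        (∏ j, ∏ k ∈ Finset.Ioi j, |u j - u k| ^ (2 : ℝ)) *
          ∏ j, u j ^ a * (1 - u j) ^ b) =
    schur n κ (fun _ => 1) *
      ∏ j : Fin n,
        (Real.Gamma (a + ((n : ℝ) - (j : ℕ)) + κ j) /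
            Real.Gamma (a + b + (2 * (n : ℝ) - (j : ℕ)) + κ j)) *
          (Real.Gamma (a + b + (2 * (n : ℝ) - (j : ℕ))) /
            Real.Gamma (a + ((n : ℝ) - (j : ℕ)))) := by
  have hden (u : Fin n → ℝ) :
      (∏ j, ∏ k ∈ Finset.Ioi j, |u j - u k| ^ (2 : ℝ)) * ∏ j, u j ^ a * (1 - u j) ^ b =
        (∏ j, u j ^ a * (1 - u j) ^ b) * ∏ j, ∏ k ∈ Finset.Ioi j, (u j - u k) ^ 2 := by
    rw [mul_comm]
    simp only [Real.rpow_two, sq_abs]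
  have hpos := integral_mul_prod_sub_sq_pos (n := n) ha.le hb.le
  have hgamma : ∏ j : Fin n,
      (Real.Gamma (a + ((n : ℝ) - (j : ℕ)) + κ j) /
          Real.Gamma (a + b + (2 * (n : ℝ) - (j : ℕ)) + κ j)) *
        (Real.Gamma (a + b + (2 * (n : ℝ) - (j : ℕ))) / Real.Gamma (a + ((n : ℝ) - (j : ℕ)))) =
      (∏ i, Real.Gamma (a + 1 + (κ + delta n) i) / Real.Gamma (a + 1 + (κ + delta n) i + b + n)) /
        ∏ i, Real.Gamma (a + 1 + delta n i) / Real.Gamma (a + 1 + delta n i + b + n) := by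
    rw [← Finset.prod_div_distrib]
    refine Finset.prod_congr rfl fun j _ => ?_
    simp only [Pi.add_apply, Nat.cast_add, cast_delta]
    rw [div_div_eq_mul_div, mul_div_assoc]
    ring_nf
  simp_rw [hden]
  rw [integral_mul_prod_sub_sq ha.le hb.le] at hpos ⊢
  rw [integral_mul_schur_mul_prod_sub_sq ha.le hb.le, ← schur_one_mul_prod_delta, hgamma]
  rw [div_eq_iff hpos.ne']
  field_simp [right_ne_zero_of_mul hpos.ne']

/-- the Selberg–Jack integral in the Schur case (`θ = 1`).  Here the
normalizing constant is the Selberg integral `S_n(a,b,1)`. -/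
theorem selberg_schur_integral (n : ℕ) (a b : ℝ) (ha : 0 < a) (hb : 0 < b)
    (κ : Fin n → ℕ) (hκ : Antitone κ) :
    (∫ u in Set.univ.pi (fun _ : Fin n => Set.Icc (0 : ℝ) 1),
        (∏ j, u j ^ a * (1 - u j) ^ b) * schur n κ u *
          ∏ j, ∏ k ∈ Finset.Ioi j, (u j - u k) ^ 2) /
      (∫ u in Set.univ.pi (fun _ : Fin n => Set.Icc (0 : ℝ) 1),
        (∏ j, ∏ k ∈ Finset.Ioi j, |u j - u k| ^ (2 : ℝ)) *
          ∏ j, u j ^ a * (1 - u j) ^ b) =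
    schur n κ (fun _ => 1) *
      ∏ j : Fin n,
        (Real.Gamma (a + ((n : ℝ) - (j : ℕ)) + κ j) /
            Real.Gamma (a + b + (2 * (n : ℝ) - (j : ℕ)) + κ j)) *
          (Real.Gamma (a + b + (2 * (n : ℝ) - (j : ℕ))) /
            Real.Gamma (a + ((n : ℝ) - (j : ℕ)))) :=
  selberg_schur_integral_general n a b ha hb κ
end

section
/- (Distributional invariance of singular values under truncation restructuring) Let $n \le n_1, n_2 \le m$ be positive integers. Let $T$ and $\widetilde{T}$ be respectively the $n_2\times n_1$ and $n_2 \times n$ upper-left truncations of a Haar-distributed unitary matrix from $U(m)$. Let $X$ be a fixed $n_1\times n$ complex matrix and $\widetilde{X} = (X^*X)^{1/2}$. Then the vector of singular values of $TX$ has the same distribution as the vector of singular values of $\widetilde{T}\widetilde{X}$. -/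
/-! `T X` and `T̃ X̃` are the first `n₂` rows of `S (E₁ X)` and `S (E₂ X̃)`, where `E₁`, `E₂` embed
`ℂ^{n₁}`, `ℂⁿ` as the first coordinates of `ℂᵐ`. As `E₁ X` and `E₂ X̃` have the same Gram matrix
`XᴴX`, `E₁ X = V E₂ X̃` for a unitary `V`, so `T X` is literally `T̃ X̃` computed from `S V` instead
of `S`. And `S V` is again Haar distributed: if `μ` is left-invariant and `ν` right-invariant, the
image of `ν ⊗ μ` under multiplication is both `μ` and `ν`; taking for `ν` the image of `μ` under
`S ↦ Sᴴ` makes `μ` invariant under `Sᴴ`, hence right-invariant. -/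

open MeasureTheory Matrix ComplexOrder

noncomputable instance (m : ℕ) : MeasurableSpace (Matrix (Fin m) (Fin m) ℂ) := borel _

/-- The vector of singular values of a rectangular complex matrix (in some order):
square roots of the eigenvalues of `Aᴴ * A`. -/
noncomputable def sval {p q : ℕ} (A : Matrix (Fin p) (Fin q) ℂ) : Fin q → ℝ :=
  fun i => Real.sqrt ((Matrix.isHermitian_conjTranspose_mul_self A).eigenvalues i)

/-- The positive semidefinite square root of a positive semidefinite matrix (the definition
Mathlib had as `Matrix.PosSemidef.sqrt`, since removed). -/
noncomputable def Matrix.PosSemidef.sqrt {n 𝕜 : Type*} [Fintype n] [RCLike 𝕜] [DecidableEq n]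
    {A : Matrix n n 𝕜} (hA : A.PosSemidef) : Matrix n n 𝕜 :=
  hA.1.eigenvectorUnitary.1 * Matrix.diagonal ((↑) ∘ Real.sqrt ∘ hA.1.eigenvalues) *
    (star hA.1.eigenvectorUnitary : Matrix n n 𝕜)

namespace Matrix.PosSemidef

variable {n 𝕜 : Type*} [Fintype n] [RCLike 𝕜] [DecidableEq n] {A : Matrix n n 𝕜}

theorem conjTranspose_sqrt (hA : A.PosSemidef) : hA.sqrtᴴ = hA.sqrt := by
  simp only [sqrt, conjTranspose_mul, star_eq_conjTranspose, conjTranspose_conjTranspose,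
    diagonal_conjTranspose, Matrix.mul_assoc]
  congr 3
  ext i
  simp

theorem sqrt_mul_sqrt (hA : A.PosSemidef) : hA.sqrt * hA.sqrt = A := by
  conv_rhs => rw [hA.1.spectral_theorem, Unitary.conjStarAlgAut_apply]
  simp only [sqrt, Matrix.mul_assoc]
  rw [← Matrix.mul_assoc (star _) (hA.1.eigenvectorUnitary : Matrix n n 𝕜),
    Unitary.coe_star_mul_self, Matrix.one_mul, ← Matrix.mul_assoc (diagonal _),
    diagonal_mul_diagonal]
  congr 3
  ext i
  simp [← RCLike.ofReal_mul, Real.mul_self_sqrt (hA.eigenvalues_nonneg i)]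

end Matrix.PosSemidef

theorem LinearMap.exists_linearIsometry_comp_eq {𝕜 E V : Type*} [RCLike 𝕜]
    [AddCommGroup E] [Module 𝕜 E] [NormedAddCommGroup V] [InnerProductSpace 𝕜 V]
    [FiniteDimensional 𝕜 V] (f g : E →ₗ[𝕜] V) (h : ∀ x, ‖f x‖ = ‖g x‖) :
    ∃ W : V →ₗᵢ[𝕜] V, W.toLinearMap ∘ₗ g = f := by
  have hker : LinearMap.ker g ≤ LinearMap.ker f := fun x hx => by
    rw [LinearMap.mem_ker, ← norm_eq_zero, h, norm_eq_zero, ← LinearMap.mem_ker]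
    exact hx
  let L₀ : LinearMap.range g →ₗ[𝕜] V :=
    (LinearMap.ker g).liftQ f hker ∘ₗ g.quotKerEquivRange.symm.toLinearMap
  have hL₀ : ∀ x, L₀ (g.rangeRestrict x) = f x := fun x => by
    change (LinearMap.ker g).liftQ f hker
      (g.quotKerEquivRange.symm (g.quotKerEquivRange (Submodule.Quotient.mk x))) = f x
    rw [LinearEquiv.symm_apply_apply]
    rfl
  let L : LinearMap.range g →ₗᵢ[𝕜] V :=
    ⟨L₀, by rintro ⟨-, x, rfl⟩; exact (congrArg norm (hL₀ x)).trans (h x)⟩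
  exact ⟨L.extend, LinearMap.ext fun x => (L.extend_apply (g.rangeRestrict x)).trans (hL₀ x)⟩

section

variable {𝕜 m n : Type*} [RCLike 𝕜] [Fintype m] [DecidableEq m] [Fintype n] [DecidableEq n]

theorem Matrix.inner_toEuclideanLin_toEuclideanLin (A : Matrix m n 𝕜) (x y : EuclideanSpace 𝕜 n) :
    inner 𝕜 (toEuclideanLin A x) (toEuclideanLin A y) = inner 𝕜 x (toEuclideanLin (Aᴴ * A) y) := by
  rw [← LinearMap.adjoint_inner_right, ← toEuclideanLin_conjTranspose_eq_adjoint,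
    toLpLin_mul_same, LinearMap.comp_apply]

theorem Matrix.exists_unitary_mul_eq_of_conjTranspose_mul_self_eq (A B : Matrix m n 𝕜)
    (h : Aᴴ * A = Bᴴ * B) : ∃ V ∈ unitary (Matrix m m 𝕜), V * B = A := by
  have hnorm : ∀ x, ‖toEuclideanLin A x‖ = ‖toEuclideanLin B x‖ := fun x => by
    rw [@norm_eq_sqrt_re_inner 𝕜, @norm_eq_sqrt_re_inner 𝕜, inner_toEuclideanLin_toEuclideanLin,
      inner_toEuclideanLin_toEuclideanLin, h]
  obtain ⟨W, hW⟩ := (toEuclideanLin A).exists_linearIsometry_comp_eq (toEuclideanLin B) hnorm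
  let u := Unitary.linearIsometryEquiv.symm (W.toLinearIsometryEquiv rfl)
  refine ⟨(toEuclideanCLM (n := m) (𝕜 := 𝕜)).symm u, Unitary.map_mem _ u.2,
    toEuclideanLin.injective ?_⟩
  rw [← hW, toLpLin_mul_same, ← coe_toEuclideanCLM_eq_toEuclideanLin,
    StarAlgEquiv.apply_symm_apply]
  rfl

end

section

variable {α k l p q r : Type*} [Fintype k] [Fintype l] [DecidableEq k] [Semiring α]

theorem Matrix.submatrix_mul_eq_submatrix_mul_one_submatrix_mul
    (S : Matrix p k α) (X : Matrix l q α) (e₁ : r → p) (e₂ : l → k) :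
    S.submatrix e₁ e₂ * X = (S * ((1 : Matrix k k α).submatrix id e₂ * X)).submatrix e₁ id := by
  have hS : S * (1 : Matrix k k α).submatrix id e₂ = S.submatrix id e₂ :=
    mul_submatrix_one (Equiv.refl k) e₂ S
  rw [← Matrix.mul_assoc, hS, submatrix_mul _ _ e₁ id id Function.bijective_id]
  rfl

theorem Matrix.conjTranspose_mul_self_one_submatrix_mul [DecidableEq l] [StarRing α]
    {e : l → k} (he : Function.Injective e) (A : Matrix l q α) :
    ((1 : Matrix k k α).submatrix id e * A)ᴴ * ((1 : Matrix k k α).submatrix id e * A) = Aᴴ * A := by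
  rw [conjTranspose_mul, Matrix.mul_assoc, ← Matrix.mul_assoc _ _ A, conjTranspose_submatrix,
    conjTranspose_one, ← submatrix_mul _ _ e id e Function.bijective_id, Matrix.one_mul,
    submatrix_one e he, Matrix.one_mul]

end

namespace Matrix

variable {m : ℕ}

instance : BorelSpace (Matrix (Fin m) (Fin m) ℂ) := ⟨rfl⟩

instance : SecondCountableTopology (Matrix (Fin m) (Fin m) ℂ) :=
  inferInstanceAs (SecondCountableTopology (Fin m → Fin m → ℂ))

theorem measure_eq_of_map_mul_left_eq_of_map_mul_right_eq
    (μ ν : Measure (Matrix (Fin m) (Fin m) ℂ)) [IsProbabilityMeasure μ] [IsProbabilityMeasure ν]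
    (hμ : ∀ᵐ S ∂μ, Sᴴ * S = 1) (hν : ∀ᵐ S ∂ν, Sᴴ * S = 1)
    (hμ_left : ∀ U : Matrix (Fin m) (Fin m) ℂ, Uᴴ * U = 1 → μ.map (U * ·) = μ)
    (hν_right : ∀ U : Matrix (Fin m) (Fin m) ℂ, Uᴴ * U = 1 → ν.map (· * U) = ν) :
    ν = μ := by
  ext E hE
  have hP : MeasurableSet ((fun p : Matrix (Fin m) (Fin m) ℂ × _ => p.1 * p.2) ⁻¹' E) :=
    (by fun_prop : Measurable fun p : Matrix (Fin m) (Fin m) ℂ × _ => p.1 * p.2) hE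
  have hμE : ∀ᵐ S ∂ν, μ ((S * ·) ⁻¹' E) = μ E := by
    filter_upwards [hν] with S hS
    rw [← Measure.map_apply (by fun_prop) hE, hμ_left S hS]
  have hνE : ∀ᵐ T ∂μ, ν ((· * T) ⁻¹' E) = ν E := by
    filter_upwards [hμ] with T hT
    rw [← Measure.map_apply (by fun_prop) hE, hν_right T hT]
  calc ν E = ∫⁻ T, ν ((· * T) ⁻¹' E) ∂μ := by simp [lintegral_congr_ae hνE]
    _ = ν.prod μ ((fun p => p.1 * p.2) ⁻¹' E) := (Measure.prod_apply_symm hP).symm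
    _ = ∫⁻ S, μ ((S * ·) ⁻¹' E) ∂ν := Measure.prod_apply hP
    _ = μ E := by simp [lintegral_congr_ae hμE]

theorem map_mul_right_map_conjTranspose (μ : Measure (Matrix (Fin m) (Fin m) ℂ))
    (U : Matrix (Fin m) (Fin m) ℂ) :
    (μ.map conjTranspose).map (· * U) = (μ.map (Uᴴ * ·)).map conjTranspose := by
  have hcomm : (· * U) ∘ conjTranspose = conjTranspose ∘ (Uᴴ * ·) := by
    funext S; simp [conjTranspose_mul]
  rw [Measure.map_map (by fun_prop) (by fun_prop), hcomm,
    Measure.map_map (by fun_prop) (by fun_prop)]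

theorem conjTranspose_mul_self_conjTranspose_eq_one {U : Matrix (Fin m) (Fin m) ℂ}
    (hU : Uᴴ * U = 1) : Uᴴᴴ * Uᴴ = 1 := by
  rw [conjTranspose_conjTranspose, mul_eq_one_comm.mp hU]

variable (μ : Measure (Matrix (Fin m) (Fin m) ℂ)) [IsProbabilityMeasure μ]
  (hμ : ∀ᵐ S ∂μ, Sᴴ * S = 1)
  (hμ_left : ∀ U : Matrix (Fin m) (Fin m) ℂ, Uᴴ * U = 1 → μ.map (U * ·) = μ)

include hμ hμ_left

theorem map_conjTranspose_eq_self : μ.map conjTranspose = μ := by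
  have : IsProbabilityMeasure (μ.map conjTranspose) :=
    Measure.isProbabilityMeasure_map (by fun_prop)
  refine measure_eq_of_map_mul_left_eq_of_map_mul_right_eq μ _ hμ ?_ hμ_left fun U hU => ?_
  · rw [ae_map_iff (by fun_prop) (isClosed_eq (by fun_prop) (by fun_prop)).measurableSet]
    filter_upwards [hμ] with S hS
    exact conjTranspose_mul_self_conjTranspose_eq_one hS
  · rw [map_mul_right_map_conjTranspose, hμ_left _ (conjTranspose_mul_self_conjTranspose_eq_one hU)]

theorem map_mul_right_eq_self {V : Matrix (Fin m) (Fin m) ℂ} (hV : Vᴴ * V = 1) :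
    μ.map (· * V) = μ := by
  conv_lhs => rw [← map_conjTranspose_eq_self μ hμ hμ_left]
  rw [map_mul_right_map_conjTranspose, hμ_left _ (conjTranspose_mul_self_conjTranspose_eq_one hV),
    map_conjTranspose_eq_self μ hμ hμ_left]

theorem integral_comp_mul_right {E : Type*} [NormedAddCommGroup E] [NormedSpace ℝ E]
    {V : Matrix (Fin m) (Fin m) ℂ} (hV : Vᴴ * V = 1) (g : Matrix (Fin m) (Fin m) ℂ → E) :
    ∫ S, g (S * V) ∂μ = ∫ S, g S ∂μ := by
  let e : Matrix (Fin m) (Fin m) ℂ ≃ᵐ Matrix (Fin m) (Fin m) ℂ :=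
    { toFun := (· * V)
      invFun := (· * Vᴴ)
      left_inv := fun S => by simp [Matrix.mul_assoc, mul_eq_one_comm.mp hV]
      right_inv := fun S => by simp [Matrix.mul_assoc, hV]
      measurable_toFun := (continuous_id.matrix_mul continuous_const).measurable
      measurable_invFun := (continuous_id.matrix_mul continuous_const).measurable }
  calc ∫ S, g (S * V) ∂μ = ∫ S, g S ∂(μ.map e) := (integral_map_equiv e g).symm
    _ = ∫ S, g S ∂μ := by rw [show ⇑e = (· * V) from rfl, map_mul_right_eq_self μ hμ hμ_left hV]

end Matrix

theorem truncation_restructuring_general (n n₁ n₂ m : ℕ)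
    (h1 : n ≤ n₁) (h1m : n₁ ≤ m) (h2m : n₂ ≤ m)
    (X : Matrix (Fin n₁) (Fin n) ℂ)
    (μ : Measure (Matrix (Fin m) (Fin m) ℂ)) [IsProbabilityMeasure μ]
    (hsupp : ∀ᵐ S ∂μ, Sᴴ * S = 1)
    (hinv : ∀ U : Matrix (Fin m) (Fin m) ℂ, Uᴴ * U = 1 →
      Measure.map (fun S => U * S) μ = μ) :
    ∀ f : (Fin n → ℝ) → ℝ, Continuous f →
      (∀ (v : Fin n → ℝ) (σ : Equiv.Perm (Fin n)), f (v ∘ σ) = f v) →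
      (∫ S, f (sval ((S.submatrix (Fin.castLE h2m) (Fin.castLE h1m)) * X)) ∂μ) =
        ∫ S, f (sval ((S.submatrix (Fin.castLE h2m) (Fin.castLE (h1.trans h1m))) *
          (Matrix.posSemidef_conjTranspose_mul_self X).sqrt)) ∂μ := by
  intro f _ _
  set Y := (posSemidef_conjTranspose_mul_self X).sqrt with hY
  set E₁ := (1 : Matrix (Fin m) (Fin m) ℂ).submatrix id (Fin.castLE h1m)
  set E₂ := (1 : Matrix (Fin m) (Fin m) ℂ).submatrix id (Fin.castLE (h1.trans h1m))
  have hYY : Yᴴ * Y = Xᴴ * X := by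
    rw [hY, PosSemidef.conjTranspose_sqrt, PosSemidef.sqrt_mul_sqrt]
  have hMN : (E₁ * X)ᴴ * (E₁ * X) = (E₂ * Y)ᴴ * (E₂ * Y) := by
    rw [conjTranspose_mul_self_one_submatrix_mul (Fin.castLE_injective _),
      conjTranspose_mul_self_one_submatrix_mul (Fin.castLE_injective _), hYY]
  obtain ⟨V, hV, hVN⟩ := exists_unitary_mul_eq_of_conjTranspose_mul_self_eq _ _ hMN
  have hT : ∀ S : Matrix (Fin m) (Fin m) ℂ, S.submatrix (Fin.castLE h2m) (Fin.castLE h1m) * X =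
      (S * V * (E₂ * Y)).submatrix (Fin.castLE h2m) id := fun S => by
    rw [submatrix_mul_eq_submatrix_mul_one_submatrix_mul, ← hVN, Matrix.mul_assoc]
  have hT' : ∀ S : Matrix (Fin m) (Fin m) ℂ,
      S.submatrix (Fin.castLE h2m) (Fin.castLE (h1.trans h1m)) * Y =
      (S * (E₂ * Y)).submatrix (Fin.castLE h2m) id := fun S =>
    submatrix_mul_eq_submatrix_mul_one_submatrix_mul S Y _ _
  simp only [hT, hT']
  exact integral_comp_mul_right μ hsupp hinv (Unitary.star_mul_self_of_mem hV)
    (fun S => f (sval ((S * (E₂ * Y)).submatrix (Fin.castLE h2m) id)))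

/-- for `S` Haar-distributed on `U(m)` (modelled by a probability
measure on matrices supported on unitaries and invariant under left translation by
unitaries), the singular values of `T·X` and of `T̃·(X^*X)^{1/2}` have the same
distribution, where `T`, `T̃` are the `n₂×n₁` and `n₂×n` upper-left truncations of `S`.
Equality in distribution of the unordered collection of singular values is expressed
through symmetric continuous test functions. -/
theorem truncation_restructuring (n n₁ n₂ m : ℕ) (hn : 1 ≤ n)
    (h1 : n ≤ n₁) (h2 : n ≤ n₂) (h1m : n₁ ≤ m) (h2m : n₂ ≤ m)
    (X : Matrix (Fin n₁) (Fin n) ℂ)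
    (μ : Measure (Matrix (Fin m) (Fin m) ℂ)) [IsProbabilityMeasure μ]
    (hsupp : ∀ᵐ S ∂μ, Sᴴ * S = 1)
    (hinv : ∀ U : Matrix (Fin m) (Fin m) ℂ, Uᴴ * U = 1 →
      Measure.map (fun S => U * S) μ = μ) :
    ∀ f : (Fin n → ℝ) → ℝ, Continuous f →
      (∀ (v : Fin n → ℝ) (σ : Equiv.Perm (Fin n)), f (v ∘ σ) = f v) →
      (∫ S, f (sval ((S.submatrix (Fin.castLE h2m) (Fin.castLE h1m)) * X)) ∂μ) =
        ∫ S, f (sval ((S.submatrix (Fin.castLE h2m) (Fin.castLE (h1.trans h1m))) *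
          (Matrix.posSemidef_conjTranspose_mul_self X).sqrt)) ∂μ :=
  truncation_restructuring_general n n₁ n₂ m h1 h1m h2m X μ hsupp hinv
end

section
/- As $\epsilon \to 0^+$ with $q = e^{-\epsilon}$, for fixed real $a, b > 0$, the ratio $\frac{(q^a;q)_\infty}{(q^b;q)_\infty}$ is asymptotic to $\frac{\Gamma(b)}{\Gamma(a)}\epsilon^{b-a}$, i.e. $\lim_{\epsilon\to 0^+} \epsilon^{a-b}\frac{(q^a;q)_\infty}{(q^b;q)_\infty} = \frac{\Gamma(b)}{\Gamma(a)}$. -/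
/-- Infinite q-Pochhammer symbol `(z;q)_∞ = ∏_{i≥0} (1 - qⁱ z)`. -/
noncomputable def pochInf (q z : ℝ) : ℝ := ∏' i : ℕ, (1 - q ^ i * z)

/-!
Write `ℓ x = log (1 - e^{-x})` (`logOneSubExp`), so that with `q = e^{-ε}` we have
`log (q^c;q)_∞ = ∑ₙ ℓ (ε (n + c))` (`logPoch ε c`). Split both series at `N`.
Since `ℓ x - log x` is `1`-Lipschitz, the first `N` terms of the difference agree with
`∑_{n<N} log ((n + a)/(n + b))` up to `O(N ε)`, and together with `(b - a) log N` this is Euler's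
limit for `log Γ(b) - log Γ(a)`. Since `ℓ` is increasing and concave, each term of the tail
`∑_{n≥N} (ℓ (ε (n + a)) - ℓ (ε (n + b)))` is squeezed between `(b - a)` times consecutive
differences of `ℓ`, which telescope; as `ℓ x ≈ log x` near `0`, the tail is
`(b - a) log (ε N) + o(1)` as soon as `N → ∞` and `N ε → 0`. Taking `N ≈ ε^{-1/2}` gives the result.
-/

open Real Filter Topology Set

theorem mul_deriv_le_sub_le_mul_deriv_of_antitoneOn {f f' : ℝ → ℝ} {x y : ℝ} (hxy : x ≤ y)
    (hf : ∀ t ∈ Icc x y, HasDerivAt f (f' t) t) (hf' : AntitoneOn f' (Icc x y)) :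
    (y - x) * f' y ≤ f y - f x ∧ f y - f x ≤ (y - x) * f' x := by
  rcases hxy.eq_or_lt with rfl | hlt
  · simp
  obtain ⟨c, hc, hslope⟩ := exists_hasDerivAt_eq_slope f f' hlt
    (fun t ht => (hf t ht).continuousAt.continuousWithinAt)
    (fun t ht => hf t (Ioo_subset_Icc_self ht))
  have hc' : c ∈ Icc x y := Ioo_subset_Icc_self hc
  have hyx : 0 ≤ y - x := sub_nonneg.2 hxy
  rw [eq_div_iff (sub_pos.2 hlt).ne'] at hslope
  rw [← hslope, mul_comm (f' c)]
  exact ⟨mul_le_mul_of_nonneg_left (hf' hc' (right_mem_Icc.2 hxy) hc.2.le) hyx,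
    mul_le_mul_of_nonneg_left (hf' (left_mem_Icc.2 hxy) hc' hc.1.le) hyx⟩

noncomputable def logOneSubExp (x : ℝ) : ℝ := log (1 - exp (-x))

lemma one_sub_exp_neg_pos {x : ℝ} (hx : 0 < x) : 0 < 1 - exp (-x) :=
  sub_pos.2 (exp_lt_one_iff.2 (neg_neg_of_pos hx))

lemma hasDerivAt_logOneSubExp {x : ℝ} (hx : 0 < x) :
    HasDerivAt logOneSubExp (exp x - 1)⁻¹ x := by
  refine ((((hasDerivAt_neg x).exp).const_sub 1).log (one_sub_exp_neg_pos hx).ne').congr_deriv ?_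
  have : exp x - 1 ≠ 0 := (sub_pos.2 (one_lt_exp_iff.2 hx)).ne'
  rw [exp_neg]
  field_simp

lemma logOneSubExp_sub_bounds {x y : ℝ} (hx : 0 < x) (hxy : x ≤ y) :
    (y - x) * (exp y - 1)⁻¹ ≤ logOneSubExp y - logOneSubExp x ∧
      logOneSubExp y - logOneSubExp x ≤ (y - x) * (exp x - 1)⁻¹ :=
  mul_deriv_le_sub_le_mul_deriv_of_antitoneOn hxy
    (fun t ht => hasDerivAt_logOneSubExp (hx.trans_le ht.1))
    (fun s hs t _ hst => inv_anti₀ (sub_pos.2 (one_lt_exp_iff.2 (hx.trans_le hs.1))) (by gcongr))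

lemma abs_logOneSubExp_sub_log_sub_le {x y : ℝ} (hx : 0 < x) (hy : 0 < y) :
    |(logOneSubExp x - log x) - (logOneSubExp y - log y)| ≤ |x - y| := by
  have hderiv : ∀ t ∈ Ioi (0 : ℝ), HasDerivWithinAt (fun t => logOneSubExp t - log t)
      ((exp t - 1)⁻¹ - t⁻¹) (Ioi 0) t := fun t ht =>
    ((hasDerivAt_logOneSubExp ht).sub (hasDerivAt_log (ne_of_gt ht))).hasDerivWithinAt
  have hbound : ∀ t ∈ Ioi (0 : ℝ), ‖(exp t - 1)⁻¹ - t⁻¹‖ ≤ 1 := by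
    intro t (ht : 0 < t)
    have hE : t + 1 ≤ exp t := add_one_le_exp t
    have hE' : exp t - 1 ≤ t * exp t := by
      nlinarith [add_one_le_exp (-t), exp_pos t, exp_neg t, mul_inv_cancel₀ (exp_pos t).ne']
    have hpos : 0 < exp t - 1 := by linarith
    rw [Real.norm_eq_abs, abs_le]
    constructor
    · have key : t⁻¹ ≤ (exp t - 1)⁻¹ + 1 := by
        rw [inv_eq_one_div, inv_eq_one_div, div_add_one hpos.ne', div_le_div_iff₀ ht hpos]
        linarith
      linarith
    · rw [sub_le_iff_le_add]
      linarith [inv_anti₀ ht (by linarith : t ≤ exp t - 1)]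
  simpa [Real.norm_eq_abs] using
    (convex_Ioi 0).norm_image_sub_le_of_norm_hasDerivWithin_le hderiv hbound hy hx

lemma abs_logOneSubExp_sub_log_le {x : ℝ} (hx : 0 < x) : |logOneSubExp x - log x| ≤ x := by
  have hA := one_sub_exp_neg_pos hx
  rw [logOneSubExp, ← log_div hA.ne' hx.ne', abs_le]
  constructor
  · rw [le_log_iff_exp_le (by positivity), le_div_iff₀ hx]
    nlinarith [add_one_le_exp x, exp_pos (-x), exp_neg x, mul_inv_cancel₀ (exp_pos x).ne']
  · refine (log_nonpos (by positivity) ?_).trans hx.le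
    rw [div_le_one hx]
    linarith [add_one_le_exp (-x)]

lemma summable_logOneSubExp_mul_add {ε : ℝ} (hε : 0 < ε) (c : ℝ) :
    Summable fun n : ℕ => logOneSubExp (ε * (n + c)) := by
  have hgeom : Summable fun n : ℕ => -(exp (-(ε * c)) * exp (-ε) ^ n) :=
    ((summable_geometric_of_lt_one (exp_pos _).le
      (exp_lt_one_iff.2 (neg_neg_of_pos hε))).mul_left _).neg
  refine (Real.summable_log_one_add_of_summable hgeom).congr fun n => ?_
  rw [logOneSubExp, ← exp_nat_mul, ← exp_add, ← sub_eq_add_neg]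
  ring_nf

noncomputable def logPoch (ε c : ℝ) : ℝ := ∑' n : ℕ, logOneSubExp (ε * (n + c))

lemma pochInf_exp_neg {ε c : ℝ} (hε : 0 < ε) (hc : 0 < c) :
    pochInf (exp (-ε)) (exp (-ε) ^ c) = exp (logPoch ε c) := by
  unfold logPoch logOneSubExp
  rw [rexp_tsum_eq_tprod (fun n => one_sub_exp_neg_pos (by positivity))
    (summable_logOneSubExp_mul_add hε c), pochInf]
  refine tprod_congr fun n => ?_
  rw [← exp_nat_mul, ← exp_mul, ← exp_add]
  ring_nf

lemma logPoch_eq_sum_add {ε : ℝ} (hε : 0 < ε) (c : ℝ) (M : ℕ) :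
    logPoch ε c = ∑ n ∈ Finset.range M, logOneSubExp (ε * (n + c)) + logPoch ε (M + c) := by
  rw [logPoch, logPoch, ← (summable_logOneSubExp_mul_add hε c).sum_add_tsum_nat_add M]
  simp only [Nat.cast_add, add_assoc]

lemma logPoch_sub_logPoch_one_add {ε : ℝ} (hε : 0 < ε) (c : ℝ) :
    logPoch ε c - logPoch ε (1 + c) = logOneSubExp (ε * c) := by
  simp [logPoch_eq_sum_add hε c 1]

lemma logOneSubExp_sub_le_mul {x h d : ℝ} (hx : 0 < x) (hh : 0 ≤ h) (hd : 0 ≤ d) :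
    logOneSubExp x - logOneSubExp (x + d * h)
      ≤ d * (logOneSubExp (x + d * h) - logOneSubExp (x + d * h + h)) := by
  have hdh : 0 ≤ d * h := mul_nonneg hd hh
  have h₁ := (logOneSubExp_sub_bounds hx (le_add_of_nonneg_right hdh)).1
  have h₂ := (logOneSubExp_sub_bounds (x := x + d * h) (by positivity)
    (le_add_of_nonneg_right hh)).2
  simp only [add_sub_cancel_left] at h₁ h₂
  nlinarith [mul_le_mul_of_nonneg_left h₂ hd]

lemma mul_le_logOneSubExp_sub {x h d : ℝ} (hhx : h < x) (hh : 0 ≤ h) (hd : 0 ≤ d) :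
    d * (logOneSubExp (x - h) - logOneSubExp x) ≤ logOneSubExp x - logOneSubExp (x + d * h) := by
  have hx : 0 < x := hh.trans_lt hhx
  have h₁ := (logOneSubExp_sub_bounds hx (le_add_of_nonneg_right (mul_nonneg hd hh))).2
  have h₂ := (logOneSubExp_sub_bounds (sub_pos.2 hhx) (sub_le_self x hh)).1
  simp only [add_sub_cancel_left, sub_sub_cancel] at h₁ h₂
  nlinarith [mul_le_mul_of_nonneg_left h₂ hd]

lemma logPoch_sub_logPoch_le {ε s t : ℝ} (hε : 0 < ε) (hs : 0 < s) (hst : s ≤ t) :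
    logPoch ε s - logPoch ε t ≤ (t - s) * logOneSubExp (ε * t) := by
  have hdiff := (summable_logOneSubExp_mul_add hε s).hasSum.sub
    (summable_logOneSubExp_mul_add hε t).hasSum
  have htele := ((summable_logOneSubExp_mul_add hε t).hasSum.sub
    (summable_logOneSubExp_mul_add hε (1 + t)).hasSum).mul_left (t - s)
  rw [← logPoch, ← logPoch, logPoch_sub_logPoch_one_add hε] at htele
  refine hasSum_le (fun n => ?_) hdiff htele
  have := logOneSubExp_sub_le_mul (x := ε * (n + s)) (by positivity) hε.le (sub_nonneg.2 hst)
  rwa [show ε * (n + s) + (t - s) * ε = ε * (n + t) by ring,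
    show ε * (n + t) + ε = ε * (n + (1 + t)) by ring] at this

lemma le_logPoch_sub_logPoch {ε s t : ℝ} (hε : 0 < ε) (hs : 1 < s) (hst : s ≤ t) :
    (t - s) * logOneSubExp (ε * (s - 1)) ≤ logPoch ε s - logPoch ε t := by
  have hdiff := (summable_logOneSubExp_mul_add hε s).hasSum.sub
    (summable_logOneSubExp_mul_add hε t).hasSum
  have htele := ((summable_logOneSubExp_mul_add hε (s - 1)).hasSum.sub
    (summable_logOneSubExp_mul_add hε (1 + (s - 1))).hasSum).mul_left (t - s)
  rw [← logPoch, ← logPoch, logPoch_sub_logPoch_one_add hε, add_sub_cancel] at htele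
  refine hasSum_le (fun n => ?_) htele hdiff
  have := mul_le_logOneSubExp_sub (x := ε * (n + s)) (h := ε) (by nlinarith) hε.le
    (sub_nonneg.2 hst)
  rwa [show ε * (n + s) + (t - s) * ε = ε * (n + t) by ring,
    show ε * (n + s) - ε = ε * (n + (s - 1)) by ring] at this

lemma abs_sum_logOneSubExp_sub_log_le {ε a b : ℝ} (hε : 0 < ε) (ha : 0 < a) (hb : 0 < b)
    (M : ℕ) :
    |∑ n ∈ Finset.range M, ((logOneSubExp (ε * (n + a)) - logOneSubExp (ε * (n + b))) -
      (log (n + a) - log (n + b)))| ≤ M * (ε * |a - b|) := by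
  refine (Finset.abs_sum_le_sum_abs _ _).trans ((Finset.sum_le_sum fun n _ => ?_).trans_eq
    (by rw [Finset.sum_const, Finset.card_range, nsmul_eq_mul]))
  have hlog : ∀ c : ℝ, 0 < c → log (n + c) = log (ε * (n + c)) - log ε := fun c hc => by
    rw [log_mul hε.ne' (by positivity)]
    ring
  rw [hlog a ha, hlog b hb]
  refine (le_of_eq (congrArg abs (by ring))).trans ((abs_logOneSubExp_sub_log_sub_le
    (x := ε * (n + a)) (y := ε * (n + b)) (by positivity) (by positivity)).trans_eq ?_)
  rw [← mul_sub, abs_mul, abs_of_pos hε, add_sub_add_left_eq_sub]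

section Limits

variable {α : Type*} {l : Filter α} {ε : α → ℝ} {N : α → ℕ}

lemma tendsto_logOneSubExp_mul_add_sub_log (hε : Tendsto ε l (𝓝[>] 0))
    (hN : Tendsto N l atTop) (hεN : Tendsto (fun i => ε i * N i) l (𝓝 0)) (c : ℝ) :
    Tendsto (fun i => logOneSubExp (ε i * (N i + c)) - log (ε i * N i)) l (𝓝 0) := by
  have hNc : ∀ᶠ i in l, 0 < (N i : ℝ) + c :=
    (tendsto_natCast_atTop_atTop.comp hN).eventually (eventually_gt_atTop (-c)) |>.mono
      fun i hi => by simp only [Function.comp_apply] at hi; linarith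
  have hεpos : ∀ᶠ i in l, 0 < ε i := hε self_mem_nhdsWithin
  have hx : Tendsto (fun i => ε i * (N i + c)) l (𝓝 0) := by
    simpa [mul_add] using hεN.add ((tendsto_nhdsWithin_iff.1 hε).1.mul_const c)
  have hℓ : Tendsto (fun i => logOneSubExp (ε i * (N i + c)) - log (ε i * (N i + c))) l (𝓝 0) :=
    squeeze_zero_norm' (by
      filter_upwards [hεpos, hNc] with i hεi hNi
      exact (abs_logOneSubExp_sub_log_le (by positivity)).trans (le_abs_self _))
      (by simpa using hx.abs)
  have hratio : Tendsto (fun i => log (1 + c / N i)) l (𝓝 0) := by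
    have h1 : Tendsto (fun i => 1 + c / N i) l (𝓝 1) := by
      simpa using ((tendsto_const_div_atTop_nhds_zero_nat c).comp hN).const_add 1
    simpa [Function.comp_def] using (continuousAt_log one_ne_zero).tendsto.comp h1
  have hsum := hℓ.add hratio
  rw [add_zero] at hsum
  refine hsum.congr' ?_
  filter_upwards [hεpos, hNc, hN.eventually_ne_atTop 0] with i hεi hNi hN0
  have hN0' : (N i : ℝ) ≠ 0 := Nat.cast_ne_zero.2 hN0
  rw [one_add_div hN0', log_div hNi.ne' hN0', log_mul hεi.ne' hNi.ne', log_mul hεi.ne' hN0']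
  ring

lemma tendsto_logPoch_sub_logPoch_sub_log (hε : Tendsto ε l (𝓝[>] 0))
    (hN : Tendsto N l atTop) (hεN : Tendsto (fun i => ε i * N i) l (𝓝 0)) (c d : ℝ) :
    Tendsto (fun i => logPoch (ε i) (N i + c) - logPoch (ε i) (N i + d) -
      (d - c) * log (ε i * N i)) l (𝓝 0) := by
  wlog hcd : c ≤ d generalizing c d
  · have hneg := (this d c (le_of_not_ge hcd)).neg
    rw [neg_zero] at hneg
    refine hneg.congr fun i => ?_
    ring
  have hlower := ((tendsto_logOneSubExp_mul_add_sub_log hε hN hεN (c - 1)).const_mul (d - c))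
  have hupper := ((tendsto_logOneSubExp_mul_add_sub_log hε hN hεN d).const_mul (d - c))
  rw [mul_zero] at hlower hupper
  refine tendsto_of_tendsto_of_tendsto_of_le_of_le' hlower hupper ?_ ?_
  all_goals
    filter_upwards [hε self_mem_nhdsWithin,
      (tendsto_natCast_atTop_atTop.comp hN).eventually (eventually_gt_atTop (1 - c))]
      with i hεi hNi
    simp only [Function.comp_apply] at hNi
  · have := le_logPoch_sub_logPoch hεi (by linarith : 1 < (N i : ℝ) + c)
      (by linarith : (N i : ℝ) + c ≤ N i + d)
    rw [add_sub_add_left_eq_sub, add_sub_assoc] at this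
    linarith
  · have := logPoch_sub_logPoch_le hεi (by linarith : 0 < (N i : ℝ) + c)
      (by linarith : (N i : ℝ) + c ≤ N i + d)
    rw [add_sub_add_left_eq_sub] at this
    linarith

end Limits

lemma exists_tendsto_atTop_mul_tendsto_zero :
    ∃ N : ℝ → ℕ, Tendsto N (𝓝[>] 0) atTop ∧ Tendsto (fun ε => ε * N ε) (𝓝[>] 0) (𝓝 0) := by
  refine ⟨fun ε => ⌊(√ε)⁻¹⌋₊, ?_, ?_⟩
  · have hsqrt : Tendsto (fun ε : ℝ => √ε) (𝓝[>] 0) (𝓝[>] 0) :=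
      tendsto_nhdsWithin_of_tendsto_nhds_of_eventually_within _
        (by simpa using (continuous_sqrt.tendsto 0).mono_left nhdsWithin_le_nhds)
        (eventually_nhdsWithin_of_forall fun ε hε => sqrt_pos.2 hε)
    exact tendsto_nat_floor_atTop.comp (tendsto_inv_nhdsGT_zero.comp hsqrt)
  · have hsqrt : Tendsto (fun ε : ℝ => √ε) (𝓝[>] 0) (𝓝 0) := by
      simpa using (continuous_sqrt.tendsto 0).mono_left nhdsWithin_le_nhds
    refine squeeze_zero' (eventually_nhdsWithin_of_forall fun ε (hε : 0 < ε) =>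
      mul_nonneg hε.le (Nat.cast_nonneg _)) ?_ hsqrt
    filter_upwards [self_mem_nhdsWithin] with ε (hε : 0 < ε)
    calc ε * ⌊(√ε)⁻¹⌋₊ ≤ ε * (√ε)⁻¹ := by gcongr; exact Nat.floor_le (by positivity)
      _ = √ε := by rw [← div_eq_mul_inv, div_sqrt]

lemma mul_log_add_logPoch_sub_logPoch_eq {ε a b : ℝ} (hε : 0 < ε) {N : ℕ} (hN : N ≠ 0) :
    (a - b) * log ε + (logPoch ε a - logPoch ε b) =
      ∑ n ∈ Finset.range (N + 1), ((logOneSubExp (ε * (n + a)) - logOneSubExp (ε * (n + b))) -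
        (log (n + a) - log (n + b))) +
      (BohrMollerup.logGammaSeq b N - BohrMollerup.logGammaSeq a N) +
      (logPoch ε (N + (1 + a)) - logPoch ε (N + (1 + b)) - (b - a) * log (ε * N)) := by
  rw [logPoch_eq_sum_add hε a (N + 1), logPoch_eq_sum_add hε b (N + 1),
    BohrMollerup.logGammaSeq, BohrMollerup.logGammaSeq, log_mul hε.ne' (Nat.cast_ne_zero.2 hN),
    Finset.sum_sub_distrib, Finset.sum_sub_distrib]
  simp_rw [add_comm a, add_comm b, Finset.sum_sub_distrib]
  push_cast
  rw [add_assoc (N : ℝ) 1 a, add_assoc (N : ℝ) 1 b]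
  ring

theorem tendsto_mul_log_add_logPoch_sub_logPoch {a b : ℝ} (ha : 0 < a) (hb : 0 < b) :
    Tendsto (fun ε => (a - b) * log ε + (logPoch ε a - logPoch ε b)) (𝓝[>] 0)
      (𝓝 (log (Gamma b) - log (Gamma a))) := by
  obtain ⟨N, hN, hεN⟩ := exists_tendsto_atTop_mul_tendsto_zero
  have hε0 : Tendsto (fun ε : ℝ => ε) (𝓝[>] 0) (𝓝 0) := nhdsWithin_le_nhds
  have head : Tendsto (fun ε => ∑ n ∈ Finset.range (N ε + 1),
      ((logOneSubExp (ε * (n + a)) - logOneSubExp (ε * (n + b))) - (log (n + a) - log (n + b))))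
      (𝓝[>] 0) (𝓝 0) := by
    refine squeeze_zero_norm' ?_ (by simpa using (hεN.add hε0).mul_const |a - b|)
    filter_upwards [self_mem_nhdsWithin] with ε (hε : 0 < ε)
    refine (abs_sum_logOneSubExp_sub_log_le hε ha hb _).trans_eq ?_
    push_cast
    ring
  have gamma := ((BohrMollerup.tendsto_log_gamma hb).sub
    (BohrMollerup.tendsto_log_gamma ha)).comp hN
  have tail := tendsto_logPoch_sub_logPoch_sub_log tendsto_id hN hεN (1 + a) (1 + b)
  rw [add_sub_add_left_eq_sub] at tail
  have hsum := (head.add gamma).add tail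
  rw [zero_add, add_zero] at hsum
  refine hsum.congr' ?_
  filter_upwards [self_mem_nhdsWithin, hN.eventually_ne_atTop 0] with ε hε hNε
  exact (mul_log_add_logPoch_sub_logPoch_eq hε hNε).symm

/-- with `q = e^{-ε}`, `(qᵃ;q)_∞/(qᵇ;q)_∞ ∼ (Γ(b)/Γ(a)) ε^{b-a}` as
`ε → 0⁺`, i.e. `ε^{a-b} (qᵃ;q)_∞/(qᵇ;q)_∞ → Γ(b)/Γ(a)`. -/
theorem pochhammer_gamma_asymptotics (a b : ℝ) (ha : 0 < a) (hb : 0 < b) :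
    Filter.Tendsto
      (fun ε : ℝ => ε ^ (a - b) *
        (pochInf (Real.exp (-ε)) (Real.exp (-ε) ^ a) /
          pochInf (Real.exp (-ε)) (Real.exp (-ε) ^ b)))
      (nhdsWithin 0 (Set.Ioi 0)) (nhds (Real.Gamma b / Real.Gamma a)) := by
  have hlim := (continuous_exp.tendsto _).comp (tendsto_mul_log_add_logPoch_sub_logPoch ha hb)
  rw [exp_sub, exp_log (Gamma_pos_of_pos hb), exp_log (Gamma_pos_of_pos ha)] at hlim
  refine hlim.congr' ?_
  filter_upwards [self_mem_nhdsWithin] with ε (hε : 0 < ε)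
  rw [Function.comp_apply, pochInf_exp_neg hε ha, pochInf_exp_neg hε hb, exp_add, exp_sub,
    rpow_def_of_pos hε, mul_comm (log ε)]
end

section
/- (Skew-symmetric Hankel-type inverse via skew-orthogonal polynomials) Let $\mu$ be a positive measure on $\mathbb{R}$ with all moments $h_k = \int x^k d\mu(x)$ finite, and let $H = ((j-i)h_{i+j-1})_{i,j=0}^{2n-1}$. Suppose $\{q_0,\ldots,q_{2n-1}\}$ are polynomials with $\deg q_k = k$ satisfying the skew-orthogonality conditions $\langle q_{2k}, q_{2k+1}\rangle_\mu = r_k \ne 0$, $\langle q_{2k+1}, q_{2k}\rangle_\mu = -r_k$, and $\langle q_i, q_j\rangle_\mu = 0$ otherwise, where $\langle f,g\rangle_\mu = \tfrac12\int(f g' - g f')d\mu$. Define $q_{i,j} = \sum_{k=0}^{n-1} \frac{1}{r_k}\big[\tfrac{1}{i!}q_{2k}^{(i)}(0)\big]\big[\tfrac{1}{j!}q_{2k+1}^{(j)}(0)\big]$ and $Q = (\tfrac12(q_{j,i} - q_{i,j}))_{i,j=0}^{2n-1}$. Then $QH = I_{2n}$. -/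
open MeasureTheory Polynomial

/-- The skew inner product `⟨f,g⟩_μ = (1/2)∫ (f g' - g f') dμ` on polynomials. -/
noncomputable def skewInner (μ : Measure ℝ) (f g : Polynomial ℝ) : ℝ :=
  (1 / 2) * ∫ x, (f.eval x * (derivative (R := ℝ) g).eval x
      - g.eval x * (derivative (R := ℝ) f).eval x) ∂μ

/-- The coefficients `q_{i,j} = ∑_{k<n} (1/r_k) [q_{2k}^{(i)}(0)/i!][q_{2k+1}^{(j)}(0)/j!]`. -/
noncomputable def qcoef (n : ℕ) (q : ℕ → Polynomial ℝ) (r : Fin n → ℝ) (i j : ℕ) : ℝ :=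
  ∑ k : Fin n, (1 / r k) *
    (((fun p => derivative (R := ℝ) p)^[i] (q (2 * (k : ℕ)))).eval 0 / (Nat.factorial i)) *
    (((fun p => derivative (R := ℝ) p)^[j] (q (2 * (k : ℕ) + 1))).eval 0 / (Nat.factorial j))

/-!
Write `M = (⟨xⁱ, xʲ⟩_μ)`, so that `H = 2M`, and let `P` be the coefficient matrix of the `q_k`.
By bilinearity the Gram matrix `P M Pᵀ = (⟨q_i, q_j⟩_μ)`, which skew-orthogonality makes block
diagonal with blocks `[[0, r_k], [-r_k, 0]]`; its inverse `K` has blocks `[[0, -1/r_k], [1/r_k, 0]]`,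
and unwinding the definition of `q_{i,j}` gives `Q = ½ Pᵀ K P`. Since one-sided inverses of square
matrices are two-sided, `(P M) (Pᵀ K) = 1` yields `(Pᵀ K) (P M) = 1`, which is `Q H = 1`.
-/

open Matrix

section SkewInner

variable {μ : Measure ℝ}

lemma integrable_eval_of_integrable_pow (hmom : ∀ k : ℕ, Integrable (fun x => x ^ k) μ)
    (p : ℝ[X]) : Integrable (fun x => p.eval x) μ := by
  simp_rw [p.eval_eq_sum_range]
  exact integrable_finsetSum _ fun i _ => (hmom i).const_mul _

lemma skewInner_eq_integral_eval (f g : ℝ[X]) :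
    skewInner μ f g = 1 / 2 * ∫ x, (f * derivative g - g * derivative f).eval x ∂μ := by
  simp only [skewInner, eval_sub, eval_mul]

lemma skewInner_swap (f g : ℝ[X]) : skewInner μ f g = - skewInner μ g f := by
  rw [skewInner, skewInner, ← mul_neg, ← integral_neg]
  simp only [neg_sub]

lemma skewInner_self (f : ℝ[X]) : skewInner μ f f = 0 := by
  simp [skewInner]

lemma skewInner_sum_C_mul_left (hmom : ∀ k : ℕ, Integrable (fun x => x ^ k) μ) {ι : Type*}
    (s : Finset ι) (a : ι → ℝ) (f : ι → ℝ[X]) (g : ℝ[X]) :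
    skewInner μ (∑ i ∈ s, C (a i) * f i) g = ∑ i ∈ s, a i * skewInner μ (f i) g := by
  have hpoly : (∑ i ∈ s, C (a i) * f i) * derivative g - g * derivative (∑ i ∈ s, C (a i) * f i)
      = ∑ i ∈ s, C (a i) * (f i * derivative g - g * derivative (f i)) := by
    simp only [derivative_sum, derivative_C_mul, Finset.sum_mul, Finset.mul_sum,
      ← Finset.sum_sub_distrib]
    exact Finset.sum_congr rfl fun i _ => by ring
  simp only [skewInner_eq_integral_eval (f := ∑ i ∈ s, _), hpoly, eval_finsetSum, eval_mul, eval_C]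
  rw [integral_finsetSum _ fun i _ => (integrable_eval_of_integrable_pow hmom _).const_mul _,
    Finset.mul_sum]
  refine Finset.sum_congr rfl fun i _ => ?_
  rw [integral_const_mul, skewInner_eq_integral_eval]
  ring

lemma skewInner_sum_C_mul_right (hmom : ∀ k : ℕ, Integrable (fun x => x ^ k) μ) {ι : Type*}
    (s : Finset ι) (a : ι → ℝ) (f : ℝ[X]) (g : ι → ℝ[X]) :
    skewInner μ f (∑ i ∈ s, C (a i) * g i) = ∑ i ∈ s, a i * skewInner μ f (g i) := by
  simp only [skewInner_swap f, skewInner_sum_C_mul_left hmom, mul_neg, Finset.sum_neg_distrib]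

lemma skewInner_eq_sum_coeff (hmom : ∀ k : ℕ, Integrable (fun x => x ^ k) μ) {N : ℕ}
    {f g : ℝ[X]} (hf : f.natDegree < N) (hg : g.natDegree < N) :
    skewInner μ f g = ∑ j : Fin N, (∑ i : Fin N,
      f.coeff i * skewInner μ (X ^ (i : ℕ)) (X ^ (j : ℕ))) * g.coeff j := by
  conv_lhs => rw [f.as_sum_range_C_mul_X_pow' hf, g.as_sum_range_C_mul_X_pow' hg]
  rw [skewInner_sum_C_mul_right hmom, ← Fin.sum_univ_eq_sum_range (fun j => g.coeff j * _)]
  refine Finset.sum_congr rfl fun j _ => ?_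
  rw [skewInner_sum_C_mul_left hmom, ← Fin.sum_univ_eq_sum_range (fun i => f.coeff i * _),
    mul_comm]

lemma X_pow_mul_derivative_X_pow (i j : ℕ) :
    (X ^ i * derivative (X ^ j) : ℝ[X]) = C (j : ℝ) * X ^ (i + j - 1) := by
  rcases j with _ | j
  · simp
  · rw [derivative_X_pow, show i + (j + 1) - 1 = i + j by omega]
    simp only [add_tsub_cancel_right, pow_add]
    ring

lemma two_mul_skewInner_X_pow (i j : ℕ) :
    2 * skewInner μ (X ^ i) (X ^ j) = ((j : ℝ) - i) * ∫ x, x ^ (i + j - 1) ∂μ := by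
  rw [skewInner_eq_integral_eval, X_pow_mul_derivative_X_pow, X_pow_mul_derivative_X_pow,
    add_comm j i, ← sub_mul, ← C_sub]
  simp only [eval_mul, eval_C, eval_pow, eval_X]
  rw [integral_const_mul]
  ring

end SkewInner

lemma iterate_derivative_eval_zero_div_factorial {K : Type*} [Field K] [CharZero K] (p : K[X])
    (i : ℕ) :
    (derivative^[i] p).eval 0 / i.factorial = p.coeff i := by
  rw [← coeff_zero_eq_eval_zero, coeff_iterate_derivative, zero_add, Nat.descFactorial_self,
    nsmul_eq_mul, mul_div_cancel_left₀ _ (by exact_mod_cast i.factorial_ne_zero)]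

lemma qcoef_eq_sum_coeff (n : ℕ) (q : ℕ → ℝ[X]) (r : Fin n → ℝ) (i j : ℕ) :
    qcoef n q r i j =
      ∑ k : Fin n, (1 / r k) * (q (2 * (k : ℕ))).coeff i * (q (2 * (k : ℕ) + 1)).coeff j := by
  simp only [qcoef, iterate_derivative_eval_zero_div_factorial]

noncomputable def skewMomentMatrix (μ : Measure ℝ) (N : ℕ) : Matrix (Fin N) (Fin N) ℝ :=
  of fun i j => skewInner μ (X ^ (i : ℕ)) (X ^ (j : ℕ))

lemma skewMomentMatrix_eq (μ : Measure ℝ) (N : ℕ) :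
    (of fun i j : Fin N => ((j : ℝ) - i) * ∫ x, x ^ ((i : ℕ) + j - 1) ∂μ)
      = (2 : ℝ) • skewMomentMatrix μ N := by
  ext i j
  rw [skewMomentMatrix, Matrix.smul_apply, of_apply, of_apply, smul_eq_mul,
    two_mul_skewInner_X_pow]

def coeffMatrix {R ι : Type*} [Semiring R] (p : ι → R[X]) (N : ℕ) : Matrix ι (Fin N) R :=
  of fun i j => (p i).coeff j

lemma coeffMatrix_mul_skewMomentMatrix_mul_transpose {μ : Measure ℝ}
    (hmom : ∀ k : ℕ, Integrable (fun x => x ^ k) μ) {ι : Type*} {N : ℕ} {p : ι → ℝ[X]}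
    (hp : ∀ i, (p i).natDegree < N) :
    coeffMatrix p N * skewMomentMatrix μ N * (coeffMatrix p N)ᵀ
      = of fun i j => skewInner μ (p i) (p j) := by
  ext i j
  simp only [mul_apply, coeffMatrix, skewMomentMatrix, of_apply, transpose_apply]
  exact (skewInner_eq_sum_coeff hmom (hp i) (hp j)).symm

def skewBlock {R : Type*} [Ring R] (a : R) : Matrix (Fin 2) (Fin 2) R := !![0, a; -a, 0]

lemma skewBlock_mul_skewBlock_neg_inv {K : Type*} [Field K] {a : K} (ha : a ≠ 0) :
    skewBlock a * skewBlock (-a⁻¹) = 1 := by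
  ext i j
  fin_cases i <;> fin_cases j <;> simp [skewBlock, ha]

/-- Indexed by `Fin 2 × Fin n` so that the Gram matrix of the family is a `Matrix.blockDiagonal`. -/
def pairedFamily {α : Type*} (q : ℕ → α) (n : ℕ) (x : Fin 2 × Fin n) : α :=
  q (2 * (x.2 : ℕ) + x.1)

lemma skewGram_pairedFamily_eq_blockDiagonal {n : ℕ} {μ : Measure ℝ} {q : ℕ → ℝ[X]}
    {r : Fin n → ℝ}
    (hskew1 : ∀ k : Fin n, skewInner μ (q (2 * (k : ℕ))) (q (2 * (k : ℕ) + 1)) = r k)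
    (hskew2 : ∀ k : Fin n, skewInner μ (q (2 * (k : ℕ) + 1)) (q (2 * (k : ℕ))) = - r k)
    (hskew0 : ∀ i j, i < 2 * n → j < 2 * n →
      (¬ ∃ k : Fin n, (i = 2 * (k : ℕ) ∧ j = 2 * (k : ℕ) + 1) ∨
        (i = 2 * (k : ℕ) + 1 ∧ j = 2 * (k : ℕ))) →
      skewInner μ (q i) (q j) = 0) :
    (of fun x y => skewInner μ (pairedFamily q n x) (pairedFamily q n y))
      = blockDiagonal fun k => skewBlock (r k) := by
  ext ⟨b, k⟩ ⟨b', k'⟩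
  simp only [of_apply, blockDiagonal_apply, pairedFamily]
  split_ifs with hk
  · subst hk
    fin_cases b <;> fin_cases b' <;> simp [skewBlock, hskew1, hskew2, skewInner_self]
  · apply hskew0 _ _ (by omega) (by omega)
    rintro ⟨m, ⟨h1, h2⟩ | ⟨h1, h2⟩⟩ <;> exact hk (by ext; omega)

lemma qcoef_antisymm_matrix_eq (n N : ℕ) (q : ℕ → ℝ[X]) (r : Fin n → ℝ) :
    (of fun i j : Fin N => (1 / 2) * (qcoef n q r j i - qcoef n q r i j))
      = (1 / 2 : ℝ) • ((coeffMatrix (pairedFamily q n) N)ᵀ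
          * blockDiagonal (fun k => skewBlock (-(r k)⁻¹)) * coeffMatrix (pairedFamily q n) N) := by
  ext i j
  simp only [of_apply, Matrix.smul_apply, smul_eq_mul, mul_apply, transpose_apply,
    blockDiagonal_apply, coeffMatrix, pairedFamily, qcoef_eq_sum_coeff, Fintype.sum_prod_type,
    Fin.sum_univ_two]
  simp only [skewBlock, of_apply, cons_val', cons_val_zero, cons_val_one, cons_val_fin_one,
    Fin.isValue, mul_zero, mul_ite, ite_self, Finset.sum_const_zero, Finset.sum_ite_eq',
    Finset.mem_univ, if_true, add_zero, ← Finset.sum_sub_distrib, ← Finset.sum_add_distrib]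
  congr 1
  refine Finset.sum_congr rfl fun k _ => ?_
  simp only [Fin.val_zero, Fin.val_one, add_zero]
  ring

/-- inverse of a skew-symmetric Hankel-type matrix via skew-orthogonal
polynomials: with `H = ((j-i) h_{i+j-1})` and `Q = (½(q_{j,i} - q_{i,j}))`, `Q H = I`. -/
theorem skew_hankel_inverse (n : ℕ) (μ : Measure ℝ)
    (hmom : ∀ k : ℕ, Integrable (fun x => x ^ k) μ)
    (q : ℕ → Polynomial ℝ)
    (hdeg : ∀ k, k < 2 * n → (q k).natDegree = k)
    (r : Fin n → ℝ) (hr : ∀ k, r k ≠ 0)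
    (hskew1 : ∀ k : Fin n, skewInner μ (q (2 * (k : ℕ))) (q (2 * (k : ℕ) + 1)) = r k)
    (hskew2 : ∀ k : Fin n, skewInner μ (q (2 * (k : ℕ) + 1)) (q (2 * (k : ℕ))) = - r k)
    (hskew0 : ∀ i j, i < 2 * n → j < 2 * n →
      (¬ ∃ k : Fin n, (i = 2 * (k : ℕ) ∧ j = 2 * (k : ℕ) + 1) ∨
        (i = 2 * (k : ℕ) + 1 ∧ j = 2 * (k : ℕ))) →
      skewInner μ (q i) (q j) = 0) :
    (Matrix.of fun i j : Fin (2 * n) =>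
        (1 / 2) * (qcoef n q r (j : ℕ) (i : ℕ) - qcoef n q r (i : ℕ) (j : ℕ))) *
      (Matrix.of fun i j : Fin (2 * n) =>
        ((j : ℝ) - (i : ℝ)) * ∫ x, x ^ ((i : ℕ) + (j : ℕ) - 1) ∂μ) = 1 := by
  set P := coeffMatrix (pairedFamily q n) (2 * n)
  set M := skewMomentMatrix μ (2 * n)
  set K : Matrix (Fin 2 × Fin n) (Fin 2 × Fin n) ℝ := blockDiagonal fun k => skewBlock (-(r k)⁻¹)
  have hP : ∀ x, (pairedFamily q n x).natDegree < 2 * n := fun ⟨b, k⟩ => by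
    rw [pairedFamily, hdeg _ (by omega)]
    omega
  have hGK : P * M * (Pᵀ * K) = 1 := by
    rw [← Matrix.mul_assoc, coeffMatrix_mul_skewMomentMatrix_mul_transpose hmom hP,
      skewGram_pairedFamily_eq_blockDiagonal hskew1 hskew2 hskew0, ← blockDiagonal_mul,
      ← blockDiagonal_one]
    exact congrArg blockDiagonal (funext fun k => skewBlock_mul_skewBlock_neg_inv (hr k))
  have hKG : Pᵀ * K * (P * M) = 1 := (mul_eq_one_comm_of_equiv finProdFinEquiv).1 hGK
  rw [qcoef_antisymm_matrix_eq, skewMomentMatrix_eq, smul_mul_smul_comm,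
    Matrix.mul_assoc _ P M, hKG]
  norm_num
end

section
/- (Characteristic polynomial recursion for the $\infty$-Jacobi transition) Let $0 < x_1 < \cdots < x_n < 1$ and $\nu > 0$, and let $\tilde{y} = (\tilde{y}_1, \ldots, \tilde{y}_n)$ with $0 \le \tilde y_1 \le x_1 \le \cdots \le \tilde y_n \le x_n$ be the unique solution of the critical point equations $\sum_{j=1}^n \frac{1}{\tilde{y}_i - x_j} + \frac{\nu+1}{\tilde{y}_i} = 0$ for $i = 1,\ldots,n$. Then the polynomial identity $\frac{1}{n}\sum_{i=1}^n \Big(z - \frac{\nu+1}{n+\nu+1}x_i\Big)\prod_{j\ne i}(z - x_j) = \prod_{i=1}^n (z - \tilde{y}_i)$ holds for all $z$. -/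
/-!
With `p = ∏ (X - xᵢ)`, the left-hand side is `(z p'(z) + (ν + 1) p(z)) / (n + ν + 1)`, since
`∑ᵢ ∏_{j≠i} (z - xⱼ) = p'(z)`. As `p'(y)/p(y) = ∑ⱼ 1/(y - xⱼ)`, the critical point equations say
exactly that `X p' + (ν + 1) p` vanishes at every `ỹᵢ`. This polynomial has degree `n` and leading
coefficient `n + ν + 1`, and the `ỹᵢ` are distinct by interlacing, so it equals
`(n + ν + 1) ∏ (X - ỹᵢ)`.
-/

open Polynomial Finset

theorem Fin.strictMono_of_interlacing {α : Type*} [Preorder α] {n : ℕ} {x y : Fin n → α}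
    (hyx : ∀ i, y i < x i) (hxy : ∀ i : Fin n, ∀ h : (i : ℕ) + 1 < n, x i ≤ y ⟨(i : ℕ) + 1, h⟩) :
    StrictMono y := by
  cases n with
  | zero => exact fun i => i.elim0
  | succ m =>
    exact Fin.strictMono_iff_lt_succ.2 fun i => (hyx _).trans_le (hxy i.castSucc (by simp))

namespace Polynomial

section CommRing

variable {R : Type*} [CommRing R]

theorem coeff_X_mul_derivative (p : R[X]) (m : ℕ) :
    (X * derivative p).coeff m = m * p.coeff m := by
  cases m with
  | zero => simp
  | succ k => simp [coeff_X_mul, coeff_derivative, mul_comm]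

theorem degree_X_mul_derivative_add_C_mul_sub_lt {p q : R[X]} (hp : p.Monic) (hq : q.Monic)
    (hpq : p.natDegree = q.natDegree) (c : R) :
    (X * derivative p + C c * p - C (p.natDegree + c) * q).degree < (p.natDegree : WithBot ℕ) := by
  rw [degree_lt_iff_coeff_zero]
  intro m hm
  simp only [coeff_sub, coeff_add, coeff_C_mul, coeff_X_mul_derivative]
  rcases hm.eq_or_lt with rfl | hlt
  · rw [hp.coeff_natDegree, hpq, hq.coeff_natDegree]
    ring
  · rw [coeff_eq_zero_of_natDegree_lt hlt, coeff_eq_zero_of_natDegree_lt (hpq ▸ hlt)]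
    ring

theorem eval_derivative_prod_X_sub_C {ι : Type*} [Fintype ι] [DecidableEq ι] (x : ι → R) (a : R) :
    (derivative (∏ i, (X - C (x i)))).eval a = ∑ i, ∏ j ∈ univ.erase i, (a - x j) := by
  simp [derivative_prod_finset, eval_finsetSum, eval_prod]

theorem sum_sub_mul_mul_prod_erase {ι : Type*} [Fintype ι] [DecidableEq ι] (x : ι → R) (a z : R) :
    ∑ i, (z - a * x i) * ∏ j ∈ univ.erase i, (z - x j) =
      (1 - a) * z * ∑ i, ∏ j ∈ univ.erase i, (z - x j) + a * Fintype.card ι * ∏ j, (z - x j) := by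
  calc ∑ i, (z - a * x i) * ∏ j ∈ univ.erase i, (z - x j)
      = ∑ i, ((1 - a) * z * ∏ j ∈ univ.erase i, (z - x j)
          + a * ((z - x i) * ∏ j ∈ univ.erase i, (z - x j))) :=
        sum_congr rfl fun i _ => by ring
    _ = _ := by
        simp only [sum_add_distrib, ← mul_sum, mul_prod_erase univ (fun j => z - x j) (mem_univ _),
          sum_const, card_univ, nsmul_eq_mul]
        ring

variable [IsDomain R]

theorem X_mul_derivative_add_C_mul_eq_of_eval_eq_zero {ι : Type*} [Fintype ι] {p : R[X]}
    (hp : p.Monic) (hdeg : p.natDegree = Fintype.card ι) {y : ι → R} (hy : Function.Injective y)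
    (c : R) (hroot : ∀ i, (X * derivative p + C c * p).eval (y i) = 0) :
    X * derivative p + C c * p = C (Fintype.card ι + c) * ∏ i, (X - C (y i)) := by
  have hq : (∏ i, (X - C (y i))).Monic := monic_prod_X_sub_C _ _
  have hqdeg : (∏ i, (X - C (y i))).natDegree = Fintype.card ι := by simp
  rw [← sub_eq_zero]
  refine eq_zero_of_degree_lt_of_eval_index_eq_zero univ hy.injOn ?_ fun i _ => ?_
  · simpa [hdeg] using degree_X_mul_derivative_add_C_mul_sub_lt hp hq (hdeg.trans hqdeg.symm) c
  · simp [hroot i, eval_prod, prod_eq_zero (mem_univ i)]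

end CommRing

theorem eval_derivative_prod_X_sub_C_of_ne {K ι : Type*} [Field K] [Fintype ι] [DecidableEq ι]
    (x : ι → K) {a : K} (ha : ∀ j, a ≠ x j) :
    (derivative (∏ i, (X - C (x i)))).eval a = (∑ j, 1 / (a - x j)) * ∏ j, (a - x j) := by
  rw [eval_derivative_prod_X_sub_C, sum_mul]
  refine sum_congr rfl fun i _ => ?_
  rw [← mul_prod_erase univ (fun j => a - x j) (mem_univ i)]
  field_simp [sub_ne_zero.2 (ha i)]

end Polynomial

theorem infty_jacobi_characteristic_recursion_general (n : ℕ) (hn : 1 ≤ n) (ν : ℝ) (hν : 0 < ν)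
    (x y : Fin n → ℝ)
    (hyx : ∀ i, y i ≤ x i)
    (hxy : ∀ i : Fin n, ∀ h : (i : ℕ) + 1 < n, x i ≤ y ⟨(i : ℕ) + 1, h⟩)
    (hne : ∀ i j, y i ≠ x j) (hy0' : ∀ i, y i ≠ 0)
    (hcrit : ∀ i, (∑ j, 1 / (y i - x j)) + (ν + 1) / y i = 0) :
    ∀ z : ℝ,
      (1 / (n : ℝ)) * ∑ i, (z - (ν + 1) / ((n : ℝ) + ν + 1) * x i) *
          ∏ j ∈ Finset.univ.erase i, (z - x j) =
        ∏ i, (z - y i) := by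
  set p : ℝ[X] := ∏ i, (X - C (x i))
  have hy : StrictMono y := Fin.strictMono_of_interlacing (fun i => (hyx i).lt_of_ne (hne i i)) hxy
  have hroot : ∀ i, (X * derivative p + C (ν + 1) * p).eval (y i) = 0 := fun i => by
    have hsum : ∑ j, 1 / (y i - x j) = -((ν + 1) / y i) := eq_neg_of_add_eq_zero_left (hcrit i)
    have hyi := hy0' i
    simp only [p, eval_add, eval_mul, eval_X, eval_C, eval_derivative_prod_X_sub_C_of_ne x (hne i),
      hsum, eval_prod, eval_sub]
    field_simp
    ring
  have hpq := X_mul_derivative_add_C_mul_eq_of_eval_eq_zero (monic_prod_X_sub_C _ _) (by simp)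
    hy.injective (ν + 1) hroot
  intro z
  have hpq_z := congrArg (eval z) hpq
  simp only [eval_add, eval_mul, eval_X, eval_C, eval_derivative_prod_X_sub_C, eval_prod,
    eval_sub, Fintype.card_fin] at hpq_z
  rw [sum_sub_mul_mul_prod_erase, Fintype.card_fin]
  have hn0 : (n : ℝ) ≠ 0 := Nat.cast_ne_zero.2 (by omega)
  have hden : (n : ℝ) + ν + 1 ≠ 0 := by positivity
  field_simp
  linear_combination (n : ℝ) * hpq_z

/-- characteristic polynomial recursion for the `∞`-Jacobi transition.
If `ỹ` interlaces with `x` and solves the critical point equations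
`∑ⱼ 1/(ỹᵢ - xⱼ) + (ν+1)/ỹᵢ = 0`, then
`(1/n) ∑ᵢ (z - (ν+1)/(n+ν+1) xᵢ) ∏_{j≠i} (z - xⱼ) = ∏ᵢ (z - ỹᵢ)` for all `z`. -/
theorem infty_jacobi_characteristic_recursion (n : ℕ) (hn : 1 ≤ n) (ν : ℝ) (hν : 0 < ν)
    (x y : Fin n → ℝ) (hx : StrictMono x)
    (hx0 : ∀ i, 0 < x i) (hx1 : ∀ i, x i < 1)
    (hy0 : ∀ i, 0 ≤ y i) (hyx : ∀ i, y i ≤ x i)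
    (hxy : ∀ i : Fin n, ∀ h : (i : ℕ) + 1 < n, x i ≤ y ⟨(i : ℕ) + 1, h⟩)
    (hne : ∀ i j, y i ≠ x j) (hy0' : ∀ i, y i ≠ 0)
    (hcrit : ∀ i, (∑ j, 1 / (y i - x j)) + (ν + 1) / y i = 0) :
    ∀ z : ℝ,
      (1 / (n : ℝ)) * ∑ i, (z - (ν + 1) / ((n : ℝ) + ν + 1) * x i) *
          ∏ j ∈ Finset.univ.erase i, (z - x j) =
        ∏ i, (z - y i) :=
  infty_jacobi_characteristic_recursion_general n hn ν hν x y hyx hxy hne hy0' hcrit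
end

section
/- (Gradient cancellation identity for the frozen Jacobi transition) Let $0 < x_1 < \cdots < x_n < 1$, $\nu > 0$, and let $\tilde{y}_1 < \cdots < \tilde{y}_n$ be the roots of $\frac{1}{n}\sum_{i=1}^n (z - \frac{\nu+1}{n+\nu+1}x_i)\prod_{j\ne i}(z - x_j)$. Then for each $i = 1,\ldots,n$: $\sum_{j=1}^n \frac{1}{x_i - \tilde{y}_j} = \frac{\nu+2}{x_i} + 2\sum_{j\ne i}\frac{1}{x_i - x_j}$. -/
/-!
With `q = ∏ⱼ (X - xⱼ)` and `c = (ν+1)/(n+ν+1)`, splitting `z - c xᵢ = (1 - c) z + c (z - xᵢ)`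
shows that the polynomial with roots `ỹ` is `((1 - c)/n) z q'(z) + c q(z)`. The left-hand side is
its logarithmic derivative at the root `xᵢ` of `q`, namely
`(1 - c + c n)/((1 - c) xᵢ) + q''(xᵢ)/q'(xᵢ)`; the first term is `(ν+2)/xᵢ` and the second is
`2 ∑_{j≠i} 1/(xᵢ - xⱼ)`, since `q = (X - xᵢ) qᵢ` gives `q'(xᵢ) = qᵢ(xᵢ)` and `q''(xᵢ) = 2 qᵢ'(xᵢ)`.
-/

open Polynomial Finset

namespace Lagrange

theorem sum_X_sub_C_mul_nodal_erase {R : Type*} [CommRing R] {ι : Type*} [DecidableEq ι]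
    (s : Finset ι) (v : ι → R) (c : R) :
    ∑ i ∈ s, (X - C (c * v i)) * nodal (s.erase i) v =
      C (1 - c) * X * derivative (nodal s v) + C (c * #s) * nodal s v := by
  have hnodal : ∀ i ∈ s, (X - C (v i)) * nodal (s.erase i) v = nodal s v :=
    fun i hi => (nodal_eq_mul_nodal_erase hi).symm
  calc ∑ i ∈ s, (X - C (c * v i)) * nodal (s.erase i) v
      = ∑ i ∈ s, (C (1 - c) * X * nodal (s.erase i) v + C c * nodal s v) :=
        sum_congr rfl fun i hi => by rw [← hnodal i hi, C_sub, C_1, C_mul]; ring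
    _ = C (1 - c) * X * derivative (nodal s v) + C (c * #s) * nodal s v := by
        rw [sum_add_distrib, ← mul_sum, derivative_nodal, sum_const, nsmul_eq_mul, C_mul,
          map_natCast]
        ring

theorem nodal_eq_of_forall_mean_eq_prod {F : Type*} [Field F] [Infinite F] {ι : Type*}
    [Fintype ι] [DecidableEq ι] {x y : ι → F} {c : F} (hcard : (Fintype.card ι : F) ≠ 0)
    (h : ∀ z, 1 / (Fintype.card ι : F) * ∑ i, (z - c * x i) * ∏ j ∈ univ.erase i, (z - x j) =
      ∏ i, (z - y i)) :
    nodal univ y =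
      C ((1 - c) / Fintype.card ι) * X * derivative (nodal univ x) + C c * nodal univ x := by
  have hsum : nodal univ y =
      C (1 / (Fintype.card ι : F)) * ∑ i, (X - C (c * x i)) * nodal (univ.erase i) x :=
    Polynomial.funext fun z => by rw [eval_nodal, ← h z]; simp [eval_nodal, eval_finsetSum]
  rw [hsum, sum_X_sub_C_mul_nodal_erase, card_univ, mul_add, ← mul_assoc, ← mul_assoc,
    ← mul_assoc, ← C_mul, ← C_mul]
  congr 3 <;> field_simp

section Field

variable {F : Type*} [Field F] {ι : Type*} [DecidableEq ι] {s : Finset ι} {v : ι → F}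

theorem eval_derivative_nodal_div_eval_nodal {a : F} (ha : ∀ i ∈ s, a ≠ v i) :
    eval a (derivative (nodal s v)) / eval a (nodal s v) = ∑ i ∈ s, (a - v i)⁻¹ := by
  rw [derivative_nodal, eval_finsetSum, sum_div]
  refine sum_congr rfl fun i hi => ?_
  have hai : a - v i ≠ 0 := sub_ne_zero.2 (ha i hi)
  have herase : eval a (nodal (s.erase i) v) ≠ 0 :=
    eval_nodal_not_at_node fun j hj => ha j (mem_of_mem_erase hj)
  rw [nodal_eq_mul_nodal_erase hi, eval_mul, eval_sub, eval_X, eval_C]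
  field_simp

theorem eval_derivative_derivative_nodal_div_at_node (hvs : Set.InjOn v s) {i : ι} (hi : i ∈ s) :
    eval (v i) (derivative (derivative (nodal s v))) / eval (v i) (derivative (nodal s v)) =
      2 * ∑ j ∈ s.erase i, (v i - v j)⁻¹ := by
  have hnode : ∀ j ∈ s.erase i, v i ≠ v j := fun j hj =>
    hvs.ne hi (mem_of_mem_erase hj) (ne_of_mem_erase hj).symm
  have hsecond : derivative (derivative (nodal s v)) = 2 * derivative (nodal (s.erase i) v) +
      (X - C (v i)) * derivative (derivative (nodal (s.erase i) v)) := by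
    rw [nodal_eq_mul_nodal_erase hi]
    simp only [derivative_mul, derivative_X_sub_C, one_mul, derivative_add]
    ring
  rw [hsecond, eval_nodal_derivative_eval_node_eq hi, ← eval_derivative_nodal_div_eval_nodal hnode]
  simp [mul_div_assoc]

end Field

end Lagrange

theorem Polynomial.eval_derivative_div_eval_of_eq_C_mul_X_mul_derivative_add {F : Type*} [Field F]
    {p q : F[X]} {a b r : F} (hp : p = C a * X * derivative q + C b * q) (ha : a ≠ 0) (hr : r ≠ 0)
    (hqr : eval r q = 0) (hq'r : eval r (derivative q) ≠ 0) :
    eval r (derivative p) / eval r p =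
      (a + b) / (a * r) + eval r (derivative (derivative q)) / eval r (derivative q) := by
  subst hp
  simp only [derivative_add, derivative_mul, derivative_C, derivative_X, eval_add, eval_mul,
    eval_C, eval_X, hqr, zero_mul, zero_add, mul_one, mul_zero, add_zero]
  field_simp
  ring

open Lagrange in
theorem frozen_jacobi_gradient_cancellation_general (n : ℕ) (ν : ℝ) (hν : 0 < ν)
    (x y : Fin n → ℝ) (hx : StrictMono x)
    (hx0 : ∀ i, 0 < x i)
    (hne : ∀ i j, x i ≠ y j)
    (hroots : ∀ z : ℝ,
      (1 / (n : ℝ)) * ∑ i, (z - (ν + 1) / ((n : ℝ) + ν + 1) * x i) *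
          ∏ j ∈ Finset.univ.erase i, (z - x j) =
        ∏ i, (z - y i)) :
    ∀ i, ∑ j, 1 / (x i - y j) =
      (ν + 2) / x i + 2 * ∑ j ∈ Finset.univ.erase i, 1 / (x i - x j) := by
  intro i
  set c := (ν + 1) / ((n : ℝ) + ν + 1) with hc
  have hn : (n : ℝ) ≠ 0 := Nat.cast_ne_zero.2 i.pos.ne'
  have hpoly := nodal_eq_of_forall_mean_eq_prod (x := x) (y := y) (c := c) (by simpa using hn)
    (by simpa using hroots)
  have h1c : (1 - c) / Fintype.card (Fin n) = 1 / (n + ν + 1) := by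
    rw [hc, Fintype.card_fin]; field_simp; ring
  have hcoef : (1 / (n + ν + 1) + c) / (1 / (n + ν + 1) * x i) = (ν + 2) / x i := by
    have hxi := (hx0 i).ne'
    rw [hc]; field_simp; ring
  have hq' : eval (x i) (derivative (nodal univ x)) ≠ 0 := by
    rw [eval_nodal_derivative_eval_node_eq (mem_univ i)]
    exact eval_nodal_not_at_node fun j hj h => ne_of_mem_erase hj (hx.injective h).symm
  rw [h1c] at hpoly
  calc ∑ j, 1 / (x i - y j)
      = eval (x i) (derivative (nodal univ y)) / eval (x i) (nodal univ y) := by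
        rw [eval_derivative_nodal_div_eval_nodal fun j _ => hne i j]; simp only [one_div]
    _ = (ν + 2) / x i + 2 * ∑ j ∈ univ.erase i, 1 / (x i - x j) := by
        rw [eval_derivative_div_eval_of_eq_C_mul_X_mul_derivative_add hpoly (by positivity)
          (hx0 i).ne' (eval_nodal_at_node (mem_univ i)) hq',
          eval_derivative_derivative_nodal_div_at_node hx.injective.injOn (mem_univ i), hcoef]
        simp only [one_div]

/-- gradient cancellation identity for the frozen Jacobi transition.
If `ỹ₁ < ⋯ < ỹₙ` are the roots of `(1/n) ∑ᵢ (z - (ν+1)/(n+ν+1) xᵢ) ∏_{j≠i}(z - xⱼ)`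
(with `xᵢ ≠ ỹⱼ` for all `i,j`), then
`∑ⱼ 1/(xᵢ - ỹⱼ) = (ν+2)/xᵢ + 2 ∑_{j≠i} 1/(xᵢ - xⱼ)` for each `i`. -/
theorem frozen_jacobi_gradient_cancellation (n : ℕ) (hn : 1 ≤ n) (ν : ℝ) (hν : 0 < ν)
    (x y : Fin n → ℝ) (hx : StrictMono x)
    (hx0 : ∀ i, 0 < x i) (hx1 : ∀ i, x i < 1)
    (hy : StrictMono y) (hne : ∀ i j, x i ≠ y j)
    (hroots : ∀ z : ℝ,
      (1 / (n : ℝ)) * ∑ i, (z - (ν + 1) / ((n : ℝ) + ν + 1) * x i) *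
          ∏ j ∈ Finset.univ.erase i, (z - x j) =
        ∏ i, (z - y i)) :
    ∀ i, ∑ j, 1 / (x i - y j) =
      (ν + 2) / x i + 2 * ∑ j ∈ Finset.univ.erase i, 1 / (x i - x j) :=
  frozen_jacobi_gradient_cancellation_general n ν hν x y hx hx0 hne hroots
end

section
/- (Normalization of the rank-one perturbation Markov kernel, unitary case $\theta = 1$) For fixed $0 < x_1 < \cdots < x_n < 1$ and integer $\nu \ge 0$, $\int_{R} \frac{\Gamma(\nu+n+1)}{\Gamma(\nu+1)}\,\frac{\triangle(y)}{\triangle(x)}\prod_{i=1}^n \frac{y_i^{\nu}}{x_i^{\nu+1}}\, dy_1\cdots dy_n = 1$, where $R = \{0 \le y_1 \le x_1 \le y_2 \le \cdots \le y_n \le x_n\}$ and $\triangle(z) = \prod_{1\le i<j\le n}(z_j - z_i)$. -/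
/-!
The interlacing region is the box `∏ᵢ [xᵢ₋₁, xᵢ]` with `x₀ = 0` (encoded as `Fin.cons 0 x`),
and by Vandermonde the kernel is a constant multiple of `det (yᵢ ^ (ν + j))`. Since row `i`
depends on `yᵢ` only, integrating over the box integrates each row separately, giving
`det ((xᵢ ^ (ν + j + 1) - xᵢ₋₁ ^ (ν + j + 1)) / (ν + j + 1))`. Adding each row to the next
telescopes this to `det (xᵢ ^ (ν + 1 + j)) / ∏ⱼ (ν + j + 1)`, which is
`∏ᵢ xᵢ ^ (ν + 1) · Δ(x) / ∏ⱼ (ν + j + 1)` by Vandermonde again, and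
`Γ(ν + n + 1) / Γ(ν + 1) = ∏ⱼ (ν + j + 1)` cancels the constant.
-/

open MeasureTheory Matrix Set

theorem Matrix.det_of_sub_castSucc {R : Type*} [CommRing R] {n : ℕ}
    (f : Fin (n + 1) → Fin n → R) (hf : f 0 = 0) :
    det (of fun i j => f i.succ j - f i.castSucc j) = det (of fun i j => f i.succ j) := by
  cases n with
  | zero => simp
  | succ m =>
    refine (det_eq_of_forall_row_eq_smul_add_pred (fun _ => 1) (fun j => by simp [hf])
      fun i j => ?_).symm
    simp only [of_apply, Fin.succ_castSucc]
    ring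

theorem Matrix.det_of_pow_add {R : Type*} [CommRing R] {n : ℕ} (ν : ℕ) (y : Fin n → R) :
    det (of fun i j : Fin n => y i ^ (ν + j)) =
      (∏ i, y i ^ ν) * ∏ i, ∏ j ∈ Finset.Ioi i, (y j - y i) := by
  rw [← det_vandermonde, ← det_mul_column]
  congr with i j
  simp [vandermonde, pow_add]

theorem setIntegral_Icc_pi_prod {ι : Type*} [Fintype ι] (a b : ι → ℝ) (f : ι → ℝ → ℝ) :
    ∫ y in Icc a b, ∏ i, f i (y i) = ∏ i, ∫ t in Icc (a i) (b i), f i t := by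
  rw [← pi_univ_Icc, volume_pi, Measure.restrict_pi_pi]
  exact integral_fintype_prod_eq_prod _

theorem setIntegral_Icc_det {ι : Type*} [Fintype ι] [DecidableEq ι] (a b : ι → ℝ)
    (f : ι → ℝ → ℝ) (hf : ∀ j, Continuous (f j)) :
    ∫ y in Icc a b, det (of fun i j => f j (y i)) =
      det (of fun i j => ∫ t in Icc (a i) (b i), f j t) := by
  have hint (σ : Equiv.Perm ι) :
      IntegrableOn (fun y : ι → ℝ => (σ.sign : ℝ) * ∏ i, f (σ i) (y i)) (Icc a b) :=
    Continuous.integrableOn_Icc (by fun_prop)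
  simp_rw [← det_transpose (of _), det_apply', transpose_apply, of_apply]
  rw [integral_finsetSum _ fun σ _ => hint σ]
  simp_rw [integral_const_mul, setIntegral_Icc_pi_prod]

theorem Real.Gamma_nat_add_div_Gamma (ν n : ℕ) :
    Gamma ((ν : ℝ) + n + 1) / Gamma ((ν : ℝ) + 1) = ∏ j : Fin n, (((ν + j : ℕ) : ℝ) + 1) := by
  rw [show (ν : ℝ) + n = ((ν + n : ℕ) : ℝ) by push_cast; ring, Gamma_nat_eq_factorial,
    Gamma_nat_eq_factorial, ← Nat.factorial_mul_ascFactorial, Nat.ascFactorial_eq_prod_range,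
    Nat.cast_mul, mul_div_cancel_left₀ _ (by positivity), Nat.cast_prod,
    Fin.prod_univ_eq_prod_range (fun j => ((ν + j : ℕ) : ℝ) + 1)]
  exact Finset.prod_congr rfl fun j _ => by push_cast; ring

theorem setOf_interlacing_eq_Icc {n : ℕ} (x : Fin n → ℝ) (hx0 : ∀ i, 0 ≤ x i) :
    {y : Fin n → ℝ | (∀ i, 0 ≤ y i) ∧ (∀ i, y i ≤ x i) ∧
        ∀ i : Fin n, ∀ h : (i : ℕ) + 1 < n, x i ≤ y ⟨(i : ℕ) + 1, h⟩} =
      Icc (fun i => (Fin.cons 0 x : Fin (n + 1) → ℝ) i.castSucc) x := by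
  have hcons : ∀ k, 0 ≤ (Fin.cons 0 x : Fin (n + 1) → ℝ) k := Fin.cases le_rfl hx0
  ext y
  refine ⟨fun ⟨h0, hle, hint⟩ => ⟨fun i => ?_, hle⟩,
    fun ⟨hlo, hle⟩ => ⟨fun i => (hcons _).trans (hlo i), hle, fun i h => hlo ⟨i + 1, h⟩⟩⟩
  obtain ⟨_ | j, hj⟩ := i
  · exact h0 _
  · exact hint ⟨j, by omega⟩ hj

theorem setIntegral_Icc_succ_det_pow {n : ℕ} (X : Fin (n + 1) → ℝ) (hX : Monotone X)
    (hX0 : X 0 = 0) (ν : ℕ) :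
    ∫ y in Icc (fun i => X i.castSucc) (fun i => X i.succ),
        det (of fun i j : Fin n => y i ^ (ν + j)) =
      (∏ j : Fin n, (((ν + j : ℕ) : ℝ) + 1))⁻¹ *
        det (of fun i j : Fin n => X i.succ ^ (ν + 1 + j)) := by
  have hentry (i j : Fin n) : ∫ t in Icc (X i.castSucc) (X i.succ), t ^ (ν + (j : ℕ)) =
      (((ν + j : ℕ) : ℝ) + 1)⁻¹ * (X i.succ ^ (ν + 1 + j) - X i.castSucc ^ (ν + 1 + j)) := by
    rw [integral_Icc_eq_integral_Ioc, ← intervalIntegral.integral_of_le (hX i.castSucc_le_succ),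
      integral_pow, div_eq_inv_mul, Nat.add_right_comm]
  rw [setIntegral_Icc_det _ _ (fun (j : Fin n) t => t ^ (ν + (j : ℕ))) fun j => by fun_prop]
  simp_rw [hentry]
  rw [← det_of_sub_castSucc (fun i (j : Fin n) => X i ^ (ν + 1 + (j : ℕ)))
    (by ext; simp [hX0]), ← Finset.prod_inv_distrib]
  exact det_mul_row (R := ℝ) _ _

theorem markov_kernel_normalization_general (n ν : ℕ) (x : Fin n → ℝ)
    (hx : StrictMono x) (hx0 : ∀ i, 0 < x i) :
    ∫ y in {y : Fin n → ℝ | (∀ i, 0 ≤ y i) ∧ (∀ i, y i ≤ x i) ∧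
        ∀ i : Fin n, ∀ h : (i : ℕ) + 1 < n, x i ≤ y ⟨(i : ℕ) + 1, h⟩},
      (Real.Gamma ((ν : ℝ) + (n : ℝ) + 1) / Real.Gamma ((ν : ℝ) + 1)) *
        ((∏ i, ∏ j ∈ Finset.Ioi i, (y j - y i)) /
          (∏ i, ∏ j ∈ Finset.Ioi i, (x j - x i))) *
        ∏ i, (y i ^ ν / x i ^ (ν + 1)) = 1 := by
  have hΔ : (∏ i, ∏ j ∈ Finset.Ioi i, (x j - x i)) ≠ 0 :=
    (Finset.prod_pos fun i _ => Finset.prod_pos fun j hj =>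
      sub_pos.2 (hx (Finset.mem_Ioi.1 hj))).ne'
  have hpow : (∏ i, x i ^ (ν + 1)) ≠ 0 :=
    Finset.prod_ne_zero_iff.2 fun i _ => pow_ne_zero _ (hx0 i).ne'
  have hdet := setIntegral_Icc_succ_det_pow (Fin.cons 0 x : Fin (n + 1) → ℝ)
    (Fin.strictMono_cons.2 ⟨hx0, hx⟩).monotone rfl ν
  simp only [Fin.cons_succ] at hdet
  rw [setOf_interlacing_eq_Icc x fun i => (hx0 i).le, Real.Gamma_nat_add_div_Gamma]
  set c := ∏ j : Fin n, (((ν + j : ℕ) : ℝ) + 1)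
  have hc : c ≠ 0 := Finset.prod_ne_zero_iff.2 fun j _ => by positivity
  have hkernel (y : Fin n → ℝ) :
      c * ((∏ i, ∏ j ∈ Finset.Ioi i, (y j - y i)) / ∏ i, ∏ j ∈ Finset.Ioi i, (x j - x i)) *
          ∏ i, (y i ^ ν / x i ^ (ν + 1)) =
        c / ((∏ i, ∏ j ∈ Finset.Ioi i, (x j - x i)) * ∏ i, x i ^ (ν + 1)) *
          det (of fun i j : Fin n => y i ^ (ν + j)) := by
    rw [det_of_pow_add, Finset.prod_div_distrib]
    field_simp
  simp_rw [hkernel, integral_const_mul]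
  rw [hdet, det_of_pow_add]
  field_simp

/-- normalization of the rank-one perturbation Markov kernel
(unitary case `θ = 1`): the kernel integrates to `1` over the interlacing region
`0 ≤ y₁ ≤ x₁ ≤ y₂ ≤ ⋯ ≤ yₙ ≤ xₙ`. -/
theorem markov_kernel_normalization (n ν : ℕ) (x : Fin n → ℝ)
    (hx : StrictMono x) (hx0 : ∀ i, 0 < x i) (hx1 : ∀ i, x i < 1) :
    ∫ y in {y : Fin n → ℝ | (∀ i, 0 ≤ y i) ∧ (∀ i, y i ≤ x i) ∧
        ∀ i : Fin n, ∀ h : (i : ℕ) + 1 < n, x i ≤ y ⟨(i : ℕ) + 1, h⟩},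
      (Real.Gamma ((ν : ℝ) + (n : ℝ) + 1) / Real.Gamma ((ν : ℝ) + 1)) *
        ((∏ i, ∏ j ∈ Finset.Ioi i, (y j - y i)) /
          (∏ i, ∏ j ∈ Finset.Ioi i, (x j - x i))) *
        ∏ i, (y i ^ ν / x i ^ (ν + 1)) = 1 :=
  markov_kernel_normalization_general n ν x hx hx0
end
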